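/- arXiv:2106.03546 — 10 statements merged into one kernel-verified Lean document; each statement's English description precedes it below -/
import Mathlib

section
/- Let r_1 ≥ r_2 ≥ ... ≥ r_s > 0 be real constants, ℓ_s < 0, and p : ℝ → [0,1] be differentiable and monotonically increasing. Define E(Δ_1,...,Δ_s) = r_1 p(Δ_1) + r_2 p(Δ_2)(1-p(Δ_1)) + ... + r_s p(Δ_s) ∏_{i=1}^{s-1}(1-p(Δ_i)) + ℓ_s ∏_{i=1}^{s}(1-p(Δ_i)). Then E is non-decreasing in each individual variable Δ_i. -/
open Finset

/-- Cascading expected reward: `E(Δ₁,…,Δ_s) = Σ_j r_j p(Δ_j) Π_{i<j}(1-p(Δ_i)) + ℓ Π_{i<s}(1-p(Δ_i))`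
(0-indexed). -/
noncomputable def cascadeE (s : ℕ) (r : ℕ → ℝ) (ℓ : ℝ) (p : ℝ → ℝ) (Δ : ℕ → ℝ) : ℝ :=
  ∑ j ∈ Finset.range s, r j * p (Δ j) * ∏ i ∈ Finset.range j, (1 - p (Δ i))
    + ℓ * ∏ i ∈ Finset.range s, (1 - p (Δ i))

lemma cascadeE_succ (s : ℕ) (r : ℕ → ℝ) (ℓ : ℝ) (p : ℝ → ℝ) (Δ : ℕ → ℝ) :
    cascadeE (s+1) r ℓ p Δ
      = r 0 * p (Δ 0)
        + (1 - p (Δ 0)) * cascadeE s (fun i => r (i+1)) ℓ p (fun i => Δ (i+1)) := by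
  unfold cascadeE
  rw [Finset.sum_range_succ', Finset.prod_range_succ']
  simp only [Finset.prod_range_succ', Finset.prod_range_zero, one_mul, mul_one]
  have h : ∀ j ∈ Finset.range s,
      r (j+1) * p (Δ (j+1)) * ((∏ i ∈ Finset.range j, (1 - p (Δ (i+1)))) * (1 - p (Δ 0)))
        = (1 - p (Δ 0)) * (r (j+1) * p (Δ (j+1)) * ∏ i ∈ Finset.range j, (1 - p (Δ (i+1)))) :=
    fun j _ => by ring
  rw [Finset.sum_congr rfl h, mul_add, Finset.mul_sum]
  ring

lemma cascadeE_le (s : ℕ) (r : ℕ → ℝ) (ℓ : ℝ) (p : ℝ → ℝ) (Δ : ℕ → ℝ) (R : ℝ)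
    (hr : ∀ i < s, r i ≤ R) (hR : 0 ≤ R) (hℓ : ℓ ≤ 0)
    (hp_range : ∀ t, p t ∈ Set.Icc (0:ℝ) 1) :
    cascadeE s r ℓ p Δ ≤ R := by
  induction s generalizing r Δ with
  | zero => simp [cascadeE]; linarith
  | succ m ih =>
      rw [cascadeE_succ]
      have hq := hp_range (Δ 0)
      obtain ⟨hq0, hq1⟩ := hq
      have hT : cascadeE m (fun i => r (i+1)) ℓ p (fun i => Δ (i+1)) ≤ R :=
        ih _ _ (fun i hi => hr (i+1) (by omega))
      have hr0 : r 0 ≤ R := hr 0 (by omega)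
      nlinarith [mul_nonneg (sub_nonneg.2 hq1) (sub_nonneg.2 hq1)]

/-- `E` is non-decreasing in each individual variable `Δ_i`. -/
theorem cascadeE_monotone_in_each_coordinate
    (s : ℕ) (r : ℕ → ℝ) (ℓ : ℝ) (p : ℝ → ℝ)
    (hr_pos : ∀ i < s, 0 < r i)
    (hr_mono : ∀ i j, i ≤ j → j < s → r j ≤ r i)
    (hℓ : ℓ < 0)
    (hp_diff : Differentiable ℝ p)
    (hp_mono : Monotone p)
    (hp_range : ∀ t, p t ∈ Set.Icc (0:ℝ) 1)
    (k : ℕ) (hk : k < s) (Δ : ℕ → ℝ) :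
    Monotone (fun t : ℝ => cascadeE s r ℓ p (Function.update Δ k t)) := by
  intro t1 t2 ht
  simp only
  clear hp_diff
  induction k generalizing s r Δ with
  | zero =>
      obtain ⟨m, rfl⟩ : ∃ m, s = m + 1 := ⟨s - 1, by omega⟩
      rw [cascadeE_succ, cascadeE_succ]
      have hup1 : ∀ t : ℝ, (fun i => Function.update Δ 0 t (i+1)) = (fun i => Δ (i+1)) := by
        intro t; funext i; simp [Function.update]
      rw [hup1, hup1]
      simp only [Function.update_self]
      set T := cascadeE m (fun i => r (i+1)) ℓ p (fun i => Δ (i+1)) with hT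
      have hTle : T ≤ r 0 := by
        apply cascadeE_le
        · exact fun i hi => hr_mono 0 (i+1) (by omega) (by omega)
        · exact le_of_lt (hr_pos 0 (by omega))
        · exact le_of_lt hℓ
        · exact hp_range
      have hp12 : p t1 ≤ p t2 := hp_mono ht
      nlinarith
  | succ k ih =>
      obtain ⟨m, rfl⟩ : ∃ m, s = m + 1 := ⟨s - 1, by omega⟩
      rw [cascadeE_succ, cascadeE_succ]
      have hup0 : ∀ t : ℝ, Function.update Δ (k+1) t 0 = Δ 0 := by
        intro t; simp [Function.update]
      have hup1 : ∀ t : ℝ, (fun i => Function.update Δ (k+1) t (i+1))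
          = Function.update (fun i => Δ (i+1)) k t := by
        intro t; funext i
        by_cases h : i = k
        · subst h; simp
        · simp [Function.update, h]
      rw [hup0, hup0, hup1, hup1]
      have h1 : 0 ≤ 1 - p (Δ 0) := sub_nonneg.2 (hp_range (Δ 0)).2
      have htail := ih m (fun i => r (i+1))
        (fun i hi => hr_pos (i+1) (by omega))
        (fun i j hij hj => hr_mono (i+1) (j+1) (by omega) (by omega))
        (by omega) (fun i => Δ (i+1))
      nlinarith
end

section
/- With E as defined (r_1 ≥ ... ≥ r_s > 0, ℓ_s < 0, p differentiable increasing), and additionally assuming r_i ∈ [0,1] for all i, ℓ_s ∈ [-1,0], and p'(Δ) ≤ z for all Δ ∈ ℝ, the partial derivative ∂E/∂Δ_i satisfies ∂E(Δ_1,...,Δ_s)/∂Δ_i ≤ z(r_i - ℓ_s) ≤ 2z for all Δ_1,...,Δ_s ∈ ℝ and all i. -/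
open Finset

/-- under the additional boundedness assumptions, each partial derivative of `E`
satisfies `∂E/∂Δ_i ≤ z (r_i - ℓ_s) ≤ 2 z`. -/
theorem cascadeE_partial_deriv_le
    (s : ℕ) (r : ℕ → ℝ) (ℓ : ℝ) (p : ℝ → ℝ) (z : ℝ)
    (hr_pos : ∀ i < s, 0 < r i)
    (hr_le_one : ∀ i < s, r i ≤ 1)
    (hr_mono : ∀ i j, i ≤ j → j < s → r j ≤ r i)
    (hℓ_neg : ℓ < 0) (hℓ_ge : -1 ≤ ℓ)
    (hp_diff : Differentiable ℝ p)
    (hp_mono : Monotone p)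
    (hp_range : ∀ t, p t ∈ Set.Icc (0:ℝ) 1)
    (hp_deriv : ∀ t : ℝ, deriv p t ≤ z) :
    ∀ (Δ : ℕ → ℝ) (i : ℕ), i < s →
      deriv (fun u : ℝ => cascadeE s r ℓ p (Function.update Δ i u)) (Δ i) ≤ z * (r i - ℓ)
        ∧ z * (r i - ℓ) ≤ 2 * z := by
  intro Δ i hi
  -- basic facts
  have hp0 : ∀ t, (0:ℝ) ≤ p t := fun t => (hp_range t).1
  have hp1 : ∀ t, p t ≤ 1 := fun t => (hp_range t).2
  have hderiv_nonneg : ∀ t, 0 ≤ deriv p t := by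
    intro t
    have h := (hp_diff t).hasDerivAt
    rw [hasDerivAt_iff_tendsto_slope] at h
    have h' : Filter.Tendsto (slope p t) (nhdsWithin t (Set.Ioi t)) (nhds (deriv p t)) :=
      h.mono_left (nhdsWithin_mono t (fun x hx => ne_of_gt hx))
    refine ge_of_tendsto h' ?_
    filter_upwards [self_mem_nhdsWithin] with x hx
    have htx : t < x := hx
    rw [slope_def_field]
    exact div_nonneg (by linarith [hp_mono htx.le]) (by linarith)
  have hz0 : 0 ≤ z := le_trans (hderiv_nonneg 0) (hp_deriv 0)
  set g : ℕ → ℝ := fun k => 1 - p (Δ k) with hg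
  have hg0 : ∀ k, 0 ≤ g k := fun k => by simp [hg]; exact hp1 _
  have hg1 : ∀ k, g k ≤ 1 := fun k => by simp [hg]; exact hp0 _
  set A : ℝ := ∑ j ∈ Finset.range i, r j * p (Δ j) * ∏ k ∈ Finset.range j, g k with hA
  set C : ℝ := ∏ k ∈ Finset.range i, g k with hC
  set S : ℝ := ∑ j ∈ Finset.Ico (i+1) s, r j * p (Δ j) * ∏ k ∈ (Finset.range j).erase i, g k
    with hS
  set P : ℝ := ∏ k ∈ (Finset.range s).erase i, g k with hP
  set D : ℝ := S + ℓ * P with hD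
  -- rewrite the function
  have key : ∀ u : ℝ, cascadeE s r ℓ p (Function.update Δ i u)
      = A + (r i * C) * p u + D * (1 - p u) := by
    intro u
    have hupd_ne : ∀ k, k ≠ i → Function.update Δ i u k = Δ k := by
      intro k hk; exact Function.update_of_ne hk _ _
    have hprod_le : ∀ j, j ≤ i →
        (∏ k ∈ Finset.range j, (1 - p (Function.update Δ i u k)))
          = ∏ k ∈ Finset.range j, g k := by
      intro j hj
      refine Finset.prod_congr rfl ?_
      intro k hk
      have : k ≠ i := by
        have := Finset.mem_range.mp hk; omega
      rw [hupd_ne k this]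
    have hprod_gt : ∀ j, i < j →
        (∏ k ∈ Finset.range j, (1 - p (Function.update Δ i u k)))
          = (1 - p u) * ∏ k ∈ (Finset.range j).erase i, g k := by
      intro j hj
      have hmem : i ∈ Finset.range j := Finset.mem_range.mpr hj
      rw [← Finset.mul_prod_erase _ _ hmem, Function.update_self]
      congr 1
      refine Finset.prod_congr rfl ?_
      intro k hk
      rw [hupd_ne k (Finset.ne_of_mem_erase hk)]
    unfold cascadeE
    rw [← Finset.sum_range_add_sum_Ico _ (Nat.succ_le_of_lt hi),
        Finset.sum_range_succ]
    have h1 : ∑ j ∈ Finset.range i,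
        r j * p (Function.update Δ i u j) * ∏ k ∈ Finset.range j,
          (1 - p (Function.update Δ i u k)) = A := by
      refine Finset.sum_congr rfl ?_
      intro j hj
      have hji : j < i := Finset.mem_range.mp hj
      rw [hupd_ne j (by omega), hprod_le j hji.le]
    have h2 : r i * p (Function.update Δ i u i) * ∏ k ∈ Finset.range i,
        (1 - p (Function.update Δ i u k)) = (r i * C) * p u := by
      rw [Function.update_self, hprod_le i le_rfl]; ring
    have h3 : ∑ j ∈ Finset.Ico (i+1) s,
        r j * p (Function.update Δ i u j) * ∏ k ∈ Finset.range j,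
          (1 - p (Function.update Δ i u k)) = S * (1 - p u) := by
      rw [hS, Finset.sum_mul]
      refine Finset.sum_congr rfl ?_
      intro j hj
      have hij : i < j := (Finset.mem_Ico.mp hj).1
      rw [hupd_ne j (by omega), hprod_gt j hij]; ring
    have h4 : ℓ * ∏ k ∈ Finset.range s,
        (1 - p (Function.update Δ i u k)) = (ℓ * P) * (1 - p u) := by
      rw [hprod_gt s hi]; ring
    rw [h1, h2, h3, h4, hD]; ring
  -- compute the derivative
  have hpd := (hp_diff (Δ i)).hasDerivAt
  have hf : HasDerivAt (fun u : ℝ => A + (r i * C) * p u + D * (1 - p u))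
      ((r i * C) * deriv p (Δ i) + D * (0 - deriv p (Δ i))) (Δ i) := by
    exact ((hpd.const_mul (r i * C)).const_add A).add
      (((hasDerivAt_const (Δ i) (1:ℝ)).sub hpd).const_mul D)
  have hderiv_eq : deriv (fun u : ℝ => cascadeE s r ℓ p (Function.update Δ i u)) (Δ i)
      = (r i * C - D) * deriv p (Δ i) := by
    have : (fun u : ℝ => cascadeE s r ℓ p (Function.update Δ i u))
        = fun u : ℝ => A + (r i * C) * p u + D * (1 - p u) := funext key
    rw [this, hf.deriv]; ring
  -- bounds
  have hC0 : 0 ≤ C := Finset.prod_nonneg fun k _ => hg0 k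
  have hC1 : C ≤ 1 := Finset.prod_le_one (fun k _ => hg0 k) (fun k _ => hg1 k)
  have hP0 : 0 ≤ P := Finset.prod_nonneg fun k _ => hg0 k
  have hP1 : P ≤ 1 := Finset.prod_le_one (fun k _ => hg0 k) (fun k _ => hg1 k)
  have hS0 : 0 ≤ S := by
    refine Finset.sum_nonneg ?_
    intro j hj
    have hjs : j < s := (Finset.mem_Ico.mp hj).2
    have := hr_pos j hjs
    have := hp0 (Δ j)
    have : (0:ℝ) ≤ ∏ k ∈ (Finset.range j).erase i, g k :=
      Finset.prod_nonneg fun k _ => hg0 k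
    positivity
  have hri0 : 0 < r i := hr_pos i hi
  have hri1 : r i ≤ 1 := hr_le_one i hi
  have hB : r i * C - D ≤ r i - ℓ := by
    have h1 : r i * C ≤ r i := by nlinarith
    have h2 : ℓ ≤ ℓ * P := by nlinarith
    rw [hD]; nlinarith
  constructor
  · rw [hderiv_eq]
    rcases le_or_gt 0 (r i * C - D) with hB0 | hB0
    · calc (r i * C - D) * deriv p (Δ i) ≤ (r i * C - D) * z :=
            mul_le_mul_of_nonneg_left (hp_deriv _) hB0
        _ ≤ (r i - ℓ) * z := mul_le_mul_of_nonneg_right hB hz0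
        _ = z * (r i - ℓ) := by ring
    · have : (r i * C - D) * deriv p (Δ i) ≤ 0 :=
        mul_nonpos_of_nonpos_of_nonneg hB0.le (hderiv_nonneg _)
      have : 0 ≤ z * (r i - ℓ) := by nlinarith
      linarith
  · nlinarith
end

section
/- With E as defined and the assumptions r_i ∈ [0,1], ℓ_s ∈ [-1,0], p'(Δ) ≤ z for all Δ, the partial derivative with respect to Δ_k satisfies ∂E(Δ_1,...,Δ_s)/∂Δ_k ≤ 2z ∏_{j=1}^{k-1}(1 - p(Δ_j)). -/
open Finset

/-- `∂E(Δ₁,…,Δ_s)/∂Δ_k ≤ 2 z Π_{j<k} (1 - p(Δ_j))`. -/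
theorem cascadeE_partial_deriv_le_prod
    (s : ℕ) (r : ℕ → ℝ) (ℓ : ℝ) (p : ℝ → ℝ) (z : ℝ)
    (hr_pos : ∀ i < s, 0 < r i)
    (hr_le_one : ∀ i < s, r i ≤ 1)
    (hr_mono : ∀ i j, i ≤ j → j < s → r j ≤ r i)
    (hℓ_neg : ℓ < 0) (hℓ_ge : -1 ≤ ℓ)
    (hp_diff : Differentiable ℝ p)
    (hp_mono : Monotone p)
    (hp_range : ∀ t, p t ∈ Set.Icc (0:ℝ) 1)
    (hp_deriv : ∀ t : ℝ, deriv p t ≤ z) :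
    ∀ (Δ : ℕ → ℝ) (k : ℕ), k < s →
      deriv (fun u : ℝ => cascadeE s r ℓ p (Function.update Δ k u)) (Δ k)
        ≤ 2 * z * ∏ j ∈ Finset.range k, (1 - p (Δ j)) := by
  intro Δ k hk
  set F : ℕ → ℝ := fun i => 1 - p (Δ i) with hFdef
  have hF0 : ∀ i, 0 ≤ F i := fun i => by
    have := (hp_range (Δ i)).2; simp [hFdef]; linarith
  have hF1 : ∀ i, F i ≤ 1 := fun i => by
    have := (hp_range (Δ i)).1; simp [hFdef]; linarith
  set A : ℝ := ∑ j ∈ Finset.range k, r j * p (Δ j) * ∏ i ∈ Finset.range j, F i with hA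
  set P : ℝ := ∏ i ∈ Finset.range k, F i with hP
  set B : ℝ := r k * P with hB
  set C : ℝ := (∑ j ∈ Finset.Ico (k+1) s, r j * p (Δ j) * ∏ i ∈ (Finset.range j).erase k, F i)
      + ℓ * ∏ i ∈ (Finset.range s).erase k, F i with hC
  -- pointwise description of the function
  have hprod_small : ∀ (u : ℝ) (j : ℕ), j ≤ k →
      (∏ i ∈ Finset.range j, (1 - p (Function.update Δ k u i))) = ∏ i ∈ Finset.range j, F i := by
    intro u j hj
    refine Finset.prod_congr rfl fun i hi => ?_
    have : i ≠ k := by have := Finset.mem_range.1 hi; omega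
    rw [Function.update_of_ne this]
  have hprod_big : ∀ (u : ℝ) (j : ℕ), k < j →
      (∏ i ∈ Finset.range j, (1 - p (Function.update Δ k u i)))
        = (1 - p u) * ∏ i ∈ (Finset.range j).erase k, F i := by
    intro u j hj
    have hkmem : k ∈ Finset.range j := Finset.mem_range.2 hj
    rw [← Finset.mul_prod_erase _ _ hkmem, Function.update_self]
    congr 1
    refine Finset.prod_congr rfl fun i hi => ?_
    rw [Function.update_of_ne (Finset.ne_of_mem_erase hi)]
  have hg : ∀ u : ℝ, cascadeE s r ℓ p (Function.update Δ k u)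
      = A + p u * B + (1 - p u) * C := by
    intro u
    unfold cascadeE
    have hsplit : ∑ j ∈ Finset.range s,
        r j * p (Function.update Δ k u j) * ∏ i ∈ Finset.range j, (1 - p (Function.update Δ k u i))
        = (∑ j ∈ Finset.range (k+1),
            r j * p (Function.update Δ k u j) * ∏ i ∈ Finset.range j, (1 - p (Function.update Δ k u i)))
          + ∑ j ∈ Finset.Ico (k+1) s,
            r j * p (Function.update Δ k u j) * ∏ i ∈ Finset.range j, (1 - p (Function.update Δ k u i)) := by
      rw [Finset.range_eq_Ico, ← Finset.sum_Ico_consecutive _ (Nat.zero_le (k+1)) hk,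
        ← Finset.range_eq_Ico]
    rw [hsplit, Finset.sum_range_succ]
    have h1 : ∑ j ∈ Finset.range k,
        r j * p (Function.update Δ k u j) * ∏ i ∈ Finset.range j, (1 - p (Function.update Δ k u i)) = A := by
      refine Finset.sum_congr rfl fun j hj => ?_
      have hjk : j < k := Finset.mem_range.1 hj
      rw [Function.update_of_ne (by omega), hprod_small u j hjk.le]
    have h2 : r k * p (Function.update Δ k u k) * ∏ i ∈ Finset.range k, (1 - p (Function.update Δ k u i))
        = p u * B := by
      rw [Function.update_self, hprod_small u k le_rfl, hB]; ring
    have h3 : ∑ j ∈ Finset.Ico (k+1) s,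
        r j * p (Function.update Δ k u j) * ∏ i ∈ Finset.range j, (1 - p (Function.update Δ k u i))
        = (1 - p u) * ∑ j ∈ Finset.Ico (k+1) s, r j * p (Δ j) * ∏ i ∈ (Finset.range j).erase k, F i := by
      rw [Finset.mul_sum]
      refine Finset.sum_congr rfl fun j hj => ?_
      have hjk : k < j := by have := (Finset.mem_Ico.1 hj).1; omega
      rw [Function.update_of_ne (by omega), hprod_big u j hjk]; ring
    have h4 : ℓ * ∏ i ∈ Finset.range s, (1 - p (Function.update Δ k u i))
        = (1 - p u) * (ℓ * ∏ i ∈ (Finset.range s).erase k, F i) := by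
      rw [hprod_big u s hk]; ring
    rw [h1, h2, h3, h4, hC]; ring
  have hfun : (fun u : ℝ => cascadeE s r ℓ p (Function.update Δ k u))
      = fun u : ℝ => A + p u * B + (1 - p u) * C := funext hg
  set d : ℝ := deriv p (Δ k) with hd
  have hpd : HasDerivAt p d (Δ k) := (hp_diff (Δ k)).hasDerivAt
  have hD : HasDerivAt (fun u : ℝ => A + p u * B + (1 - p u) * C) (d * B + (-d) * C) (Δ k) :=
    ((hpd.mul_const B).const_add A).add ((hpd.const_sub 1).mul_const C)
  rw [hfun, hD.deriv]
  -- inequalities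
  have hd0 : 0 ≤ d := by
    have h1 : Filter.Tendsto (slope p (Δ k)) (nhdsWithin (Δ k) (Set.Ioi (Δ k))) (nhds d) :=
      (hasDerivAt_iff_tendsto_slope.1 hpd).mono_left
        (nhdsWithin_mono _ (fun y hy => ne_of_gt hy))
    refine ge_of_tendsto h1 ?_
    filter_upwards [self_mem_nhdsWithin] with y hy
    have hlt : Δ k < y := hy
    rw [slope_def_field]
    exact div_nonneg (sub_nonneg.2 (hp_mono hlt.le)) (sub_nonneg.2 hlt.le)
  have hz : 0 ≤ z := hd0.trans (hp_deriv (Δ k))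
  have hP0 : 0 ≤ P := Finset.prod_nonneg fun i _ => hF0 i
  have hB0 : 0 ≤ B := mul_nonneg (hr_pos k hk).le hP0
  have hBP : B ≤ P := by
    calc B = r k * P := hB
    _ ≤ 1 * P := mul_le_mul_of_nonneg_right (hr_le_one k hk) hP0
    _ = P := one_mul P
  have hEP : ∏ i ∈ (Finset.range s).erase k, F i ≤ P := by
    have hsub : Finset.range k ⊆ (Finset.range s).erase k := by
      intro i hi
      have := Finset.mem_range.1 hi
      exact Finset.mem_erase.2 ⟨by omega, Finset.mem_range.2 (by omega)⟩
    rw [← Finset.prod_sdiff hsub]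
    have h1 : ∏ i ∈ (Finset.range s).erase k \ Finset.range k, F i ≤ 1 :=
      Finset.prod_le_one (fun i _ => hF0 i) (fun i _ => hF1 i)
    have h2 : 0 ≤ ∏ i ∈ (Finset.range s).erase k \ Finset.range k, F i :=
      Finset.prod_nonneg fun i _ => hF0 i
    nlinarith
  have hE0 : 0 ≤ ∏ i ∈ (Finset.range s).erase k, F i :=
    Finset.prod_nonneg fun i _ => hF0 i
  have hsum0 : 0 ≤ ∑ j ∈ Finset.Ico (k+1) s, r j * p (Δ j) * ∏ i ∈ (Finset.range j).erase k, F i := by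
    refine Finset.sum_nonneg fun j hj => ?_
    have hjs : j < s := (Finset.mem_Ico.1 hj).2
    exact mul_nonneg (mul_nonneg (hr_pos j hjs).le (hp_range (Δ j)).1)
      (Finset.prod_nonneg fun i _ => hF0 i)
  have hCge : -P ≤ C := by
    have : -(∏ i ∈ (Finset.range s).erase k, F i) ≤ ℓ * ∏ i ∈ (Finset.range s).erase k, F i := by
      have := mul_le_mul_of_nonneg_right hℓ_ge hE0
      linarith
    rw [hC]; nlinarith
  have hdz : d ≤ z := hp_deriv (Δ k)
  rcases le_or_gt C B with h | h
  · nlinarith [mul_le_mul_of_nonneg_right hdz (sub_nonneg.2 h)]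
  · nlinarith [mul_nonneg hd0 (sub_nonneg.2 h.le)]
end

section
/- Let J = ⟨x_{j_1},...,x_{j_s}⟩ be a sequence of items with independent Bernoulli success probabilities p_1,...,p_s, non-increasing rewards r_1 ≥ ... ≥ r_s, and terminal loss ℓ_s. Let J' be obtained from J by swapping the adjacent items at positions k and k+1. If p_{k+1} ≥ p_k, then E[R(J',Y)] − E[R(J,Y)] = Π (r_k − r_{k+1})(p_{k+1} − p_k) ≥ 0, where Π = ∏_{i=1}^{k-1}(1−p_i). In particular, sorting items in non-increasing order of success probability maximizes expected reward among orderings of a given item set. -/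
open Finset

/-- Cascading expected reward with position-wise success probabilities `q`. -/
noncomputable def cascadeER (s : ℕ) (r : ℕ → ℝ) (ℓ : ℝ) (q : ℕ → ℝ) : ℝ :=
  ∑ j ∈ Finset.range s, r j * q j * ∏ i ∈ Finset.range j, (1 - q i)
    + ℓ * ∏ i ∈ Finset.range s, (1 - q i)

/-- swapping two adjacent items at positions `k, k+1` with `q (k+1) ≥ q k`
changes the expected reward by exactly `Π (r_k - r_{k+1})(q_{k+1} - q_k) ≥ 0`, where
`Π = Π_{i<k}(1 - q_i)`. -/
theorem cascade_swap_adjacent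
    (s : ℕ) (r : ℕ → ℝ) (ℓ : ℝ) (q : ℕ → ℝ) (k : ℕ)
    (hk : k + 1 < s)
    (hq : ∀ i < s, q i ∈ Set.Icc (0:ℝ) 1)
    (hr_mono : ∀ i j, i ≤ j → j < s → r j ≤ r i)
    (hr_pos : ∀ i < s, 0 < r i)
    (hℓ : ℓ < 0)
    (hswap : q k ≤ q (k + 1)) :
    cascadeER s r ℓ (fun i => q (Equiv.swap k (k + 1) i)) - cascadeER s r ℓ q
        = (∏ i ∈ Finset.range k, (1 - q i)) * (r k - r (k + 1)) * (q (k + 1) - q k)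
      ∧ 0 ≤ cascadeER s r ℓ (fun i => q (Equiv.swap k (k + 1) i)) - cascadeER s r ℓ q := by
  set q' : ℕ → ℝ := fun i => q (Equiv.swap k (k + 1) i) with hq'def
  have hkne : k ≠ k + 1 := by omega
  have hq'k : q' k = q (k + 1) := by simp [hq'def]
  have hq'k1 : q' (k + 1) = q k := by simp [hq'def]
  have hq'ne : ∀ i, i ≠ k → i ≠ k + 1 → q' i = q i := by
    intro i h1 h2
    simp [hq'def, Equiv.swap_apply_of_ne_of_ne h1 h2]
  have hprodle : ∀ j, j ≤ k →
      ∏ i ∈ Finset.range j, (1 - q' i) = ∏ i ∈ Finset.range j, (1 - q i) := by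
    intro j hj
    refine Finset.prod_congr rfl fun i hi => ?_
    rw [Finset.mem_range] at hi
    rw [hq'ne i (by omega) (by omega)]
  have hsub : {a | Equiv.swap k (k + 1) a ≠ a} ⊆ ({k, k + 1} : Set ℕ) := by
    intro a ha
    by_contra hc
    simp only [Set.mem_insert_iff, Set.mem_singleton_iff] at hc
    push_neg at hc
    obtain ⟨h1, h2⟩ := hc
    exact ha (Equiv.swap_apply_of_ne_of_ne h1 h2)
  have hprodge : ∀ j, k + 1 < j →
      ∏ i ∈ Finset.range j, (1 - q' i) = ∏ i ∈ Finset.range j, (1 - q i) := by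
    intro j hj
    refine Equiv.Perm.prod_comp (Equiv.swap k (k + 1)) (Finset.range j)
      (fun i => 1 - q i) ?_
    intro a ha
    have := hsub ha
    simp only [Set.mem_insert_iff, Set.mem_singleton_iff] at this
    simp only [Finset.coe_range, Set.mem_Iio]
    omega
  -- the key identity
  have key : cascadeER s r ℓ q' - cascadeER s r ℓ q
      = (∏ i ∈ Finset.range k, (1 - q i)) * (r k - r (k + 1)) * (q (k + 1) - q k) := by
    unfold cascadeER
    rw [hprodge s (by omega)]
    have hsum : (∑ j ∈ Finset.range s, r j * q' j * ∏ i ∈ Finset.range j, (1 - q' i))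
        - ∑ j ∈ Finset.range s, r j * q j * ∏ i ∈ Finset.range j, (1 - q i)
        = ∑ j ∈ Finset.range s, (r j * q' j * ∏ i ∈ Finset.range j, (1 - q' i)
            - r j * q j * ∏ i ∈ Finset.range j, (1 - q i)) := by
      rw [Finset.sum_sub_distrib]
    have hzero : ∀ j ∈ Finset.range s, j ∉ ({k, k + 1} : Finset ℕ) →
        (r j * q' j * ∏ i ∈ Finset.range j, (1 - q' i)
          - r j * q j * ∏ i ∈ Finset.range j, (1 - q i)) = 0 := by
      intro j _ hj
      simp only [Finset.mem_insert, Finset.mem_singleton] at hj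
      push_neg at hj
      obtain ⟨h1, h2⟩ := hj
      rw [hq'ne j h1 h2]
      rcases lt_or_ge j k with h | h
      · rw [hprodle j (le_of_lt h)]; ring
      · rw [hprodge j (by omega)]; ring
    have hsubset : ({k, k + 1} : Finset ℕ) ⊆ Finset.range s := by
      intro x hx
      simp only [Finset.mem_insert, Finset.mem_singleton] at hx
      rw [Finset.mem_range]
      omega
    have hpair : ∑ j ∈ Finset.range s, (r j * q' j * ∏ i ∈ Finset.range j, (1 - q' i)
            - r j * q j * ∏ i ∈ Finset.range j, (1 - q i))
        = ∑ j ∈ ({k, k + 1} : Finset ℕ), (r j * q' j * ∏ i ∈ Finset.range j, (1 - q' i)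
            - r j * q j * ∏ i ∈ Finset.range j, (1 - q i)) :=
      (Finset.sum_subset hsubset (fun x hx hnx => hzero x hx hnx)).symm
    have hexp : ∑ j ∈ ({k, k + 1} : Finset ℕ), (r j * q' j * ∏ i ∈ Finset.range j, (1 - q' i)
            - r j * q j * ∏ i ∈ Finset.range j, (1 - q i))
        = (r k * q' k * ∏ i ∈ Finset.range k, (1 - q' i)
            - r k * q k * ∏ i ∈ Finset.range k, (1 - q i))
          + (r (k+1) * q' (k+1) * ∏ i ∈ Finset.range (k+1), (1 - q' i)
            - r (k+1) * q (k+1) * ∏ i ∈ Finset.range (k+1), (1 - q i)) :=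
      Finset.sum_pair hkne
    rw [show ∀ a b c : ℝ, a + b - (c + b) = a - c from fun a b c => by ring]
    rw [hsum, hpair, hexp, hprodle k le_rfl, Finset.prod_range_succ, Finset.prod_range_succ,
      hprodle k le_rfl, hq'k, hq'k1]
    ring
  refine ⟨key, ?_⟩
  rw [key]
  have hPi : 0 ≤ ∏ i ∈ Finset.range k, (1 - q i) := by
    refine Finset.prod_nonneg fun i hi => ?_
    rw [Finset.mem_range] at hi
    have := (hq i (by omega)).2
    linarith
  have hr : 0 ≤ r k - r (k + 1) := by
    have := hr_mono k (k + 1) (by omega) hk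
    linarith
  have hqd : 0 ≤ q (k + 1) - q k := by linarith
  positivity
end

section
/- Under the independent-outcome cascading model with marginal probabilities p(x), the Bayes optimal sequence of length at most b is obtained as follows: let J*_s be the sequence consisting of the s items with largest marginal probabilities, sorted in non-increasing order of p, and let s* = argmax_{s=0,1,...,b} E_Y[R(J*_s, Y)]. Then J* = J*_{s*} maximizes the expected reward over all sequences of length at most b. -/
/-!
Exchanging two adjacent items `a, b` with `p a ≤ p b` changes the expected reward by
`(r 1 - r 2) * (p b - p a) ≥ 0`, so sorting any sequence by non-increasing `p` does not decrease
its reward. A sorted duplicate-free sequence of length `s` is dominated position by position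
by the top-`s` sequence `J*_s`, and the reward is monotone in each `p(x_{j_i})` because the
reward of any continuation is at most the current success reward. Hence every admissible
sequence of length `s` earns at most `E[R(J*_s)] ≤ E[R(J*_{s*})]`.
-/

noncomputable def seqReward {ι : Type*} (p : ι → ℝ) : (ℕ → ℝ) → (ℕ → ℝ) → List ι → ℝ
  | _, l, [] => l 0
  | r, l, x :: L => r 1 * p x + (1 - p x) * seqReward p (fun i => r (i + 1)) (fun i => l (i + 1)) L

namespace List

variable {α β : Type*} [LinearOrder β] {f : α → β}

theorem Pairwise.apply_getElem_le_of_le {L : List α} (hL : L.Pairwise (fun a c => f c ≤ f a))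
    {i j : ℕ} (hji : j ≤ i) (hi : i < L.length) :
    f L[i] ≤ f (L[j]'(hji.trans_lt hi)) := by
  rcases hji.lt_or_eq with hlt | rfl
  · exact pairwise_iff_getElem.mp hL j i _ hi hlt
  · rfl

theorem forall₂_apply_le_of_top {L J : List α} (hlen : L.length = J.length) (hL : L.Nodup)
    (hLs : L.Pairwise (fun a c => f c ≤ f a)) (hJs : J.Pairwise (fun a c => f c ≤ f a))
    (htop : ∀ x ∈ J, ∀ y, y ∉ J → f y ≤ f x) :
    Forall₂ (fun x y => f x ≤ f y) L J := by
  refine forall₂_iff_get.mpr ⟨hlen, fun i hi hj => ?_⟩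
  simp only [get_eq_getElem]
  by_contra! hlt
  -- the `i + 1` first items of `L` all beat `J[i]`, so they all lie among the `i` first of `J`
  have hsub : L.take (i + 1) ⊆ J.take i := by
    intro x hx
    obtain ⟨j, hj', rfl⟩ := mem_take_iff_getElem.mp hx
    have hgt : f J[i] < f L[j] := hlt.trans_le (hLs.apply_getElem_le_of_le (by omega) hi)
    have hxJ : L[j] ∈ J := by
      by_contra hx
      exact (htop _ (getElem_mem hj) _ hx).not_gt hgt
    obtain ⟨k, hk, hkx⟩ := mem_iff_getElem.mp hxJ
    have hki : k < i := by
      by_contra! hik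
      exact (hJs.apply_getElem_le_of_le hik hk).not_gt (hkx ▸ hgt)
    exact mem_take_iff_getElem.mpr ⟨k, by omega, hkx⟩
  have := ((hL.sublist (take_sublist _ _)).subperm hsub).length_le
  simp only [length_take] at this
  omega

end List

section

variable {ι : Type*} {p : ι → ℝ}

structure IsCascadeSchedule (r ℓ : ℕ → ℝ) : Prop where
  reward_antitone : ∀ i, 1 ≤ i → r (i + 1) ≤ r i
  loss_le_reward : ∀ k, ℓ k ≤ r (k + 1)

theorem IsCascadeSchedule.shift {r ℓ : ℕ → ℝ} (h : IsCascadeSchedule r ℓ) :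
    IsCascadeSchedule (fun i => r (i + 1)) (fun i => ℓ (i + 1)) :=
  ⟨fun i _ => h.reward_antitone (i + 1) (by omega), fun k => h.loss_le_reward (k + 1)⟩

theorem seqReward_le_first_reward (hp : ∀ x, p x ≤ 1) :
    ∀ {r ℓ : ℕ → ℝ}, IsCascadeSchedule r ℓ → ∀ L : List ι, seqReward p r ℓ L ≤ r 1
  | _, _, h, [] => h.loss_le_reward 0
  | r, ℓ, h, x :: L => by
    have hL := (seqReward_le_first_reward hp h.shift L).trans (h.reward_antitone 1 le_rfl)
    rw [seqReward]
    linarith [mul_nonneg (sub_nonneg.2 (hp x)) (sub_nonneg.2 hL)]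

theorem seqReward_cons_le_cons (hp : ∀ x, p x ≤ 1) {r ℓ : ℕ → ℝ} (x : ι) {L L' : List ι}
    (h : seqReward p (fun i => r (i + 1)) (fun i => ℓ (i + 1)) L ≤
      seqReward p (fun i => r (i + 1)) (fun i => ℓ (i + 1)) L') :
    seqReward p r ℓ (x :: L) ≤ seqReward p r ℓ (x :: L') :=
  add_le_add_right (mul_le_mul_of_nonneg_left h (sub_nonneg.2 (hp x))) _

theorem seqReward_swap_le {r ℓ : ℕ → ℝ} (hr : r 2 ≤ r 1) {a b : ι} (hab : p a ≤ p b)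
    (L : List ι) : seqReward p r ℓ (a :: b :: L) ≤ seqReward p r ℓ (b :: a :: L) := by
  have hdiff : seqReward p r ℓ (b :: a :: L) - seqReward p r ℓ (a :: b :: L) =
      (r 1 - r 2) * (p b - p a) := by
    simp only [seqReward]
    ring
  linarith [mul_nonneg (sub_nonneg.2 hr) (sub_nonneg.2 hab)]

theorem seqReward_le_orderedInsert (hp : ∀ x, p x ≤ 1) :
    ∀ {r ℓ : ℕ → ℝ}, IsCascadeSchedule r ℓ → ∀ (a : ι) (L : List ι),
      seqReward p r ℓ (a :: L) ≤ seqReward p r ℓ (L.orderedInsert (fun a c => p c ≤ p a) a)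
  | _, _, _, _, [] => le_rfl
  | r, ℓ, h, a, b :: L => by
    by_cases hab : p b ≤ p a
    · simp only [List.orderedInsert, hab, if_true, le_refl]
    · simp only [List.orderedInsert, hab, if_false]
      exact (seqReward_swap_le (h.reward_antitone 1 le_rfl) (le_of_not_ge hab) L).trans
        (seqReward_cons_le_cons hp b (seqReward_le_orderedInsert hp h.shift a L))

theorem seqReward_le_insertionSort (hp : ∀ x, p x ≤ 1) :
    ∀ {r ℓ : ℕ → ℝ}, IsCascadeSchedule r ℓ → ∀ L : List ι,
      seqReward p r ℓ L ≤ seqReward p r ℓ (L.insertionSort (fun a c => p c ≤ p a))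
  | _, _, _, [] => le_rfl
  | _, _, h, x :: L =>
    (seqReward_cons_le_cons hp x (seqReward_le_insertionSort hp h.shift L)).trans
      (seqReward_le_orderedInsert hp h x _)

theorem seqReward_le_of_forall₂ (hp : ∀ x, p x ≤ 1) {r ℓ : ℕ → ℝ} (h : IsCascadeSchedule r ℓ)
    {L J : List ι} (hLJ : List.Forall₂ (fun x y => p x ≤ p y) L J) :
    seqReward p r ℓ L ≤ seqReward p r ℓ J := by
  induction hLJ generalizing r ℓ with
  | nil => rfl
  | @cons x y L J hxy _ ih =>
    have hJ := (seqReward_le_first_reward hp h.shift J).trans (h.reward_antitone 1 le_rfl)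
    have hLJ := ih h.shift
    simp only [seqReward]
    linarith [mul_nonneg (sub_nonneg.2 hxy) (sub_nonneg.2 hJ),
      mul_nonneg (sub_nonneg.2 (hp x)) (sub_nonneg.2 hLJ)]

end

theorem bayes_optimal_independent_general
    {ι : Type*} (p : ι → ℝ) (r ℓ : ℕ → ℝ) (b : ℕ)
    (hp : ∀ x, p x ∈ Set.Icc (0:ℝ) 1)
    (hr_pos : ∀ i, 1 ≤ i → 0 < r i)
    (hr_mono : ∀ i, 1 ≤ i → r (i + 1) ≤ r i)
    (hℓ_neg : ∀ i, ℓ i < 0)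
    (Js : ℕ → List ι)
    (hlen : ∀ s ≤ b, (Js s).length = s)
    (hsorted : ∀ s ≤ b, (Js s).Pairwise (fun a c => p c ≤ p a))
    (htop : ∀ s ≤ b, ∀ x ∈ Js s, ∀ y, y ∉ Js s → p y ≤ p x)
    (sstar : ℕ)
    (hmax : ∀ s ≤ b, seqReward p r ℓ (Js s) ≤ seqReward p r ℓ (Js sstar)) :
    ∀ L : List ι, L.Nodup → L.length ≤ b →
      seqReward p r ℓ L ≤ seqReward p r ℓ (Js sstar) := by
  intro L hL hLb
  have hp₁ : ∀ x, p x ≤ 1 := fun x => (hp x).2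
  have hsched : IsCascadeSchedule r ℓ :=
    ⟨hr_mono, fun k => ((hℓ_neg k).trans (hr_pos (k + 1) (by omega))).le⟩
  set rel := fun a c : ι => p c ≤ p a
  have hperm : (L.insertionSort rel).Perm L := List.perm_insertionSort rel L
  have hsortedL : (L.insertionSort rel).Pairwise rel := by
    have : Std.Total rel := ⟨fun a c => le_total (p c) (p a)⟩
    have : IsTrans ι rel := ⟨fun _ _ _ h₁ h₂ => le_trans h₂ h₁⟩
    exact List.pairwise_insertionSort rel L
  calc seqReward p r ℓ L ≤ seqReward p r ℓ (L.insertionSort rel) :=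
        seqReward_le_insertionSort hp₁ hsched L
    _ ≤ seqReward p r ℓ (Js L.length) :=
        seqReward_le_of_forall₂ hp₁ hsched <| List.forall₂_apply_le_of_top
          (by rw [hperm.length_eq, hlen _ hLb]) (hperm.nodup_iff.mpr hL) hsortedL
          (hsorted _ hLb) (htop _ hLb)
    _ ≤ seqReward p r ℓ (Js sstar) := hmax _ hLb

/-- under the independent-outcome model, if `Js s` is, for each `s ≤ b`, the
sequence of the `s` items with largest marginal probabilities sorted in non-increasing order
of `p`, and `s*` maximizes the expected reward among `s = 0,…,b`, then `Js s*` maximizes the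
expected reward over all sequences (duplicate-free lists) of length at most `b`. -/
theorem bayes_optimal_independent
    {ι : Type*} [Fintype ι] (p : ι → ℝ) (r ℓ : ℕ → ℝ) (b : ℕ)
    (hp : ∀ x, p x ∈ Set.Icc (0:ℝ) 1)
    (hr_le_one : ∀ i, 1 ≤ i → r i ≤ 1)
    (hr_pos : ∀ i, 1 ≤ i → 0 < r i)
    (hr_mono : ∀ i, 1 ≤ i → r (i + 1) ≤ r i)
    (hℓ_mono : ∀ i, ℓ (i + 1) ≤ ℓ i)
    (hℓ_neg : ∀ i, ℓ i < 0)
    (hℓ_gt : ∀ i, -1 < ℓ i)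
    (Js : ℕ → List ι)
    (hlen : ∀ s ≤ b, (Js s).length = s)
    (hnodup : ∀ s ≤ b, (Js s).Nodup)
    (hsorted : ∀ s ≤ b, (Js s).Pairwise (fun a c => p c ≤ p a))
    (htop : ∀ s ≤ b, ∀ x ∈ Js s, ∀ y, y ∉ Js s → p y ≤ p x)
    (sstar : ℕ) (hsstar : sstar ≤ b)
    (hmax : ∀ s ≤ b, seqReward p r ℓ (Js s) ≤ seqReward p r ℓ (Js sstar)) :
    ∀ L : List ι, L.Nodup → L.length ≤ b →
      seqReward p r ℓ L ≤ seqReward p r ℓ (Js sstar) :=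
  bayes_optimal_independent_general p r ℓ b hp hr_pos hr_mono hℓ_neg Js hlen hsorted htop sstar hmax
end

section
/- Replacing an item in a cascading sequence by one with larger success probability cannot decrease the expected reward: if J = ⟨x_{j_1},...,x_{j_k},...,x_{j_s}⟩ and J'' is obtained by replacing x_{j_k} with an item x_{j_k''} satisfying p(x_{j_k''}) ≥ p(x_{j_k}), then E_Y[R(J'',Y)] ≥ E_Y[R(J,Y)]. -/
lemma seqReward_le {ι : Type*} (p : ι → ℝ) (c : ℝ) :
    ∀ (L : List ι) (r ℓ : ℕ → ℝ), (∀ y, p y ∈ Set.Icc (0:ℝ) 1) →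
    (∀ i, 1 ≤ i → r i ≤ c) → ℓ L.length ≤ c → seqReward p r ℓ L ≤ c := by
  intro L
  induction L with
  | nil => intro r ℓ hp hr hl; simpa [seqReward] using hl
  | cons a L ih =>
    intro r ℓ hp hr hl
    have hS : seqReward p (fun i => r (i + 1)) (fun i => ℓ (i + 1)) L ≤ c := by
      refine ih _ _ hp (fun i hi => hr (i+1) (by omega)) ?_
      simpa using hl
    have hpa := hp a
    simp only [Set.mem_Icc] at hpa
    have hr1 : r 1 ≤ c := hr 1 le_rfl
    simp only [seqReward]
    nlinarith [hpa.1, hpa.2, hS, hr1]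

/-- replacing an item in a cascading sequence by one with larger success
probability cannot decrease the expected reward. -/
theorem cascade_replace_item
    {ι : Type*} (p : ι → ℝ) (r ℓ : ℕ → ℝ) (L1 L2 : List ι) (x x' : ι)
    (hp : ∀ y, p y ∈ Set.Icc (0:ℝ) 1)
    (hr_pos : ∀ i, 1 ≤ i → 0 < r i)
    (hr_mono : ∀ i, 1 ≤ i → r (i + 1) ≤ r i)
    (hℓ : ℓ ((L1 ++ x :: L2).length) < 0)
    (hxx' : p x ≤ p x') :
    seqReward p r ℓ (L1 ++ x :: L2) ≤ seqReward p r ℓ (L1 ++ x' :: L2) := by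
  induction L1 generalizing r ℓ with
  | nil =>
    simp only [List.nil_append, seqReward]
    set T := seqReward p (fun i => r (i + 1)) (fun i => ℓ (i + 1)) L2 with hT
    have hTle : T ≤ r 1 := by
      refine seqReward_le p (r 1) L2 _ _ hp ?_ ?_
      · intro i hi
        induction i with
        | zero => omega
        | succ n ihn =>
          rcases Nat.eq_or_lt_of_le hi with h | h
          · simp [← h]; exact hr_mono 1 le_rfl
          · exact le_trans (hr_mono (n+1) (by omega)) (ihn (by omega))
      · have : ℓ (L2.length + 1) < 0 := by simpa using hℓ
        exact le_of_lt (lt_of_lt_of_le this (le_of_lt (hr_pos 1 le_rfl)))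
    have hpx := hp x; have hpx' := hp x'
    simp only [Set.mem_Icc] at hpx hpx'
    nlinarith [hTle, hxx']
  | cons a L1 ih =>
    simp only [List.cons_append, seqReward, List.append_eq]
    have hpa := hp a
    simp only [Set.mem_Icc] at hpa
    have h := ih (fun i => r (i + 1)) (fun i => ℓ (i + 1))
      (fun i hi => hr_pos (i+1) (by omega)) (fun i hi => hr_mono (i+1) (by omega))
      (by simpa using hℓ)
    nlinarith [h, hpa.1, hpa.2]
end

section
/- Let M be a d×d positive definite real matrix with minimal eigenvalue at least b, for a positive integer b, and let x_1,...,x_b ∈ ℝ^d with ‖x_j‖ ≤ 1 for all j. Define M_j = M + x_1 x_1ᵀ + ... + x_j x_jᵀ. Then Σ_{j=1}^b x_jᵀ M⁻¹ x_j ≤ e · Σ_{j=1}^b x_jᵀ M_j⁻¹ x_j, where e is the base of natural logarithms. -/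
/-!
Each `x_i x_iᵀ` is at most the identity and `b • 1 ≤ M`, so every `M_j` is at most `2 M` in the
Loewner order. Inversion is antitone on positive definite matrices, whence
`xᵀ M⁻¹ x ≤ 2 xᵀ M_j⁻¹ x` termwise, and `2 ≤ e`.
-/

open Matrix Finset

namespace Matrix

variable {n ι : Type*} [Fintype n]

lemma dotProduct_sum_vecMulVec_self_mulVec_le (s : Finset ι) (x : ι → n → ℝ)
    (hx : ∀ i ∈ s, ∑ k, x i k ^ 2 ≤ 1) (v : n → ℝ) :
    v ⬝ᵥ (∑ i ∈ s, vecMulVec (x i) (x i)) *ᵥ v ≤ #s * ∑ k, v k ^ 2 := by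
  have hterm : ∀ i ∈ s, v ⬝ᵥ vecMulVec (x i) (x i) *ᵥ v ≤ ∑ k, v k ^ 2 := fun i hi =>
    calc v ⬝ᵥ vecMulVec (x i) (x i) *ᵥ v = (x i ⬝ᵥ v) ^ 2 := by
          rw [vecMulVec_mulVec, dotProduct_smul, op_smul_eq_mul, dotProduct_comm, sq]
      _ ≤ (∑ k, x i k ^ 2) * ∑ k, v k ^ 2 := sum_mul_sq_le_sq_mul_sq _ _ _
      _ ≤ ∑ k, v k ^ 2 := mul_le_of_le_one_left (by positivity) (hx i hi)
  rw [sum_mulVec, dotProduct_sum]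
  simpa using sum_le_card_nsmul s _ _ hterm

lemma PosDef.add_sum_vecMulVec {M : Matrix n n ℝ} (hM : M.PosDef) (s : Finset ι)
    (x : ι → n → ℝ) : (M + ∑ i ∈ s, vecMulVec (x i) (x i)).PosDef :=
  hM.add_posSemidef <| posSemidef_sum s fun i _ => by
    simpa using posSemidef_vecMulVec_self_star (x i)

variable [DecidableEq n]

/-- Half of the variational formula `xᵀ A⁻¹ x = max_q (2 xᵀ q - qᵀ A q)`: expand
`(q - A⁻¹ x)ᵀ A (q - A⁻¹ x) ≥ 0`. -/
lemma PosDef.two_mul_dotProduct_sub_le_dotProduct_inv_mulVec {A : Matrix n n ℝ} (hA : A.PosDef)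
    (x q : n → ℝ) : 2 * (x ⬝ᵥ q) - q ⬝ᵥ A *ᵥ q ≤ x ⬝ᵥ A⁻¹ *ᵥ x := by
  set p := A⁻¹ *ᵥ x
  have hAp : A *ᵥ p = x := by
    rw [mulVec_mulVec, mul_nonsing_inv _ hA.det_pos.ne'.isUnit, one_mulVec]
  have hpAq : p ⬝ᵥ A *ᵥ q = x ⬝ᵥ q := by
    rw [dotProduct_mulVec, ← mulVec_transpose, ← conjTranspose_eq_transpose_of_trivial,
      hA.isHermitian.eq, hAp]
  have hqAp : q ⬝ᵥ A *ᵥ p = x ⬝ᵥ q := by rw [hAp, dotProduct_comm]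
  have hpAp : p ⬝ᵥ A *ᵥ p = x ⬝ᵥ p := by rw [hAp, dotProduct_comm]
  have hnonneg : 0 ≤ (q - p) ⬝ᵥ A *ᵥ (q - p) := by
    simpa using hA.posSemidef.dotProduct_mulVec_nonneg (q - p)
  simp only [mulVec_sub, dotProduct_sub, sub_dotProduct, hpAq, hqAp, hpAp] at hnonneg
  linarith

lemma PosDef.dotProduct_inv_mulVec_le_of_forall_le {A B : Matrix n n ℝ} (hA : A.PosDef)
    (hB : IsUnit B.det) (hAB : ∀ v, v ⬝ᵥ A *ᵥ v ≤ v ⬝ᵥ B *ᵥ v) (x : n → ℝ) :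
    x ⬝ᵥ B⁻¹ *ᵥ x ≤ x ⬝ᵥ A⁻¹ *ᵥ x := by
  set q := B⁻¹ *ᵥ x
  have hqBq : q ⬝ᵥ B *ᵥ q = x ⬝ᵥ q := by
    rw [mulVec_mulVec, mul_nonsing_inv _ hB, one_mulVec, dotProduct_comm]
  calc x ⬝ᵥ q = 2 * (x ⬝ᵥ q) - q ⬝ᵥ B *ᵥ q := by rw [hqBq]; ring
    _ ≤ 2 * (x ⬝ᵥ q) - q ⬝ᵥ A *ᵥ q := by linarith [hAB q]
    _ ≤ x ⬝ᵥ A⁻¹ *ᵥ x := hA.two_mul_dotProduct_sub_le_dotProduct_inv_mulVec x q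

lemma PosDef.dotProduct_inv_mulVec_le_two_mul_add_sum_vecMulVec {M : Matrix n n ℝ}
    (hM : M.PosDef) (s : Finset ι) (x : ι → n → ℝ) (hx : ∀ i ∈ s, ∑ k, x i k ^ 2 ≤ 1)
    (heig : ∀ v : n → ℝ, #s * ∑ k, v k ^ 2 ≤ v ⬝ᵥ M *ᵥ v) (y : n → ℝ) :
    y ⬝ᵥ M⁻¹ *ᵥ y ≤ 2 * (y ⬝ᵥ (M + ∑ i ∈ s, vecMulVec (x i) (x i))⁻¹ *ᵥ y) := by
  have hle : ∀ v, v ⬝ᵥ (M + ∑ i ∈ s, vecMulVec (x i) (x i)) *ᵥ v ≤ v ⬝ᵥ ((2 : ℝ) • M) *ᵥ v := by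
    intro v
    rw [add_mulVec, dotProduct_add, smul_mulVec, dotProduct_smul, smul_eq_mul, two_mul]
    linarith [dotProduct_sum_vecMulVec_self_mulVec_le s x hx v, heig v]
  have h2M : IsUnit ((2 : ℝ) • M).det := (hM.smul two_pos).det_pos.ne'.isUnit
  have := (hM.add_sum_vecMulVec s x).dotProduct_inv_mulVec_le_of_forall_le h2M hle y
  rw [show ((2 : ℝ) • M)⁻¹ = (2 : ℝ)⁻¹ • M⁻¹ from
      inv_smul' M (Units.mk0 2 two_ne_zero) hM.det_pos.ne'.isUnit,
    smul_mulVec, dotProduct_smul, smul_eq_mul] at this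
  linarith

end Matrix

theorem sum_quadform_inv_le_exp_mul_general
    {d : ℕ} (b : ℕ)
    (M : Matrix (Fin d) (Fin d) ℝ) (hM : M.PosDef)
    (heig : ∀ v : Fin d → ℝ, (b : ℝ) * ∑ i, v i ^ 2 ≤ v ⬝ᵥ M.mulVec v)
    (x : ℕ → Fin d → ℝ) (hx : ∀ j < b, ∑ i, x j i ^ 2 ≤ 1) :
    ∑ j ∈ Finset.range b, x j ⬝ᵥ M⁻¹.mulVec (x j) ≤
      Real.exp 1 * ∑ j ∈ Finset.range b,
        x j ⬝ᵥ (M + ∑ i ∈ Finset.range (j + 1), Matrix.vecMulVec (x i) (x i))⁻¹.mulVec (x j) := by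
  have hterm : ∀ j ∈ range b, x j ⬝ᵥ M⁻¹ *ᵥ x j ≤
      2 * (x j ⬝ᵥ (M + ∑ i ∈ range (j + 1), vecMulVec (x i) (x i))⁻¹ *ᵥ x j) := by
    intro j hj
    have hjb : j + 1 ≤ b := mem_range.mp hj
    refine hM.dotProduct_inv_mulVec_le_two_mul_add_sum_vecMulVec _ x
      (fun i hi => hx i (by grind)) (fun v => ?_) (x j)
    calc (#(range (j + 1)) : ℝ) * ∑ k, v k ^ 2 ≤ b * ∑ k, v k ^ 2 := by
          gcongr; simpa using hjb
      _ ≤ v ⬝ᵥ M *ᵥ v := heig v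
  have hnonneg : ∀ j ∈ range b,
      0 ≤ x j ⬝ᵥ (M + ∑ i ∈ range (j + 1), vecMulVec (x i) (x i))⁻¹ *ᵥ x j := fun j _ => by
    simpa using (hM.add_sum_vecMulVec _ x).inv.posSemidef.dotProduct_mulVec_nonneg (x j)
  calc ∑ j ∈ range b, x j ⬝ᵥ M⁻¹ *ᵥ x j
      ≤ 2 * ∑ j ∈ range b, x j ⬝ᵥ (M + ∑ i ∈ range (j + 1), vecMulVec (x i) (x i))⁻¹ *ᵥ x j := by
        rw [mul_sum]; exact sum_le_sum hterm
    _ ≤ _ := by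
        gcongr
        · exact sum_nonneg hnonneg
        · linarith [Real.add_one_le_exp 1]

/-- if `M` is positive definite with minimal eigenvalue at least `b` (expressed
via the quadratic form `vᵀ M v ≥ b ‖v‖²`), and `x_0,…,x_{b-1}` have norm at most one, then
`Σ_j x_jᵀ M⁻¹ x_j ≤ e Σ_j x_jᵀ M_j⁻¹ x_j` where `M_j = M + Σ_{i ≤ j} x_i x_iᵀ`. -/
theorem sum_quadform_inv_le_exp_mul
    {d : ℕ} (b : ℕ) (hb : 0 < b)
    (M : Matrix (Fin d) (Fin d) ℝ) (hM : M.PosDef)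
    (heig : ∀ v : Fin d → ℝ, (b : ℝ) * ∑ i, v i ^ 2 ≤ v ⬝ᵥ M.mulVec v)
    (x : ℕ → Fin d → ℝ) (hx : ∀ j < b, ∑ i, x j i ^ 2 ≤ 1) :
    ∑ j ∈ Finset.range b, x j ⬝ᵥ M⁻¹.mulVec (x j) ≤
      Real.exp 1 * ∑ j ∈ Finset.range b,
        x j ⬝ᵥ (M + ∑ i ∈ Finset.range (j + 1), Matrix.vecMulVec (x i) (x i))⁻¹.mulVec (x j) :=
  sum_quadform_inv_le_exp_mul_general b M hM heig x hx
end

section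
/- Let M be a positive definite d×d matrix with minimal eigenvalue at least b ≥ 1, vectors x_1,...,x_b of norm at most 1, and M_j = M + Σ_{i≤j} x_i x_iᵀ (with M_0 = M). Then for every x ∈ ℝ^d and every j ∈ {1,...,b}, xᵀ M⁻¹ x ≤ (1 + 1/b)^j · xᵀ M_j⁻¹ x. -/
/-!
Adding `x_j x_jᵀ` raises the quadratic form of `M_{j-1}` by `(x_jᵀ w)² ≤ ‖w‖² ≤ wᵀ M w / b
≤ wᵀ M_{j-1} w / b` (Cauchy–Schwarz and `‖x_j‖ ≤ 1`), so `M_j ≤ (1 + 1/b) M_{j-1}` as quadratic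
forms. Inversion reverses this order, hence `vᵀ M_{j-1}⁻¹ v ≤ (1 + 1/b) vᵀ M_j⁻¹ v`, and the
bound follows by induction on `j`.
-/

open Matrix Finset

section

variable {n : Type*}

def rankOneUpdates (M : Matrix n n ℝ) (x : ℕ → n → ℝ) (j : ℕ) : Matrix n n ℝ :=
  M + ∑ i ∈ range j, vecMulVec (x i) (x i)

lemma rankOneUpdates_succ (M : Matrix n n ℝ) (x : ℕ → n → ℝ) (j : ℕ) :
    rankOneUpdates M x (j + 1) = rankOneUpdates M x j + vecMulVec (x j) (x j) := by
  simp only [rankOneUpdates, sum_range_succ, add_assoc]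

variable [Fintype n]

lemma dotProduct_vecMulVec_self_mulVec (w u : n → ℝ) :
    u ⬝ᵥ vecMulVec w w *ᵥ u = (w ⬝ᵥ u) ^ 2 := by
  rw [vecMulVec_mulVec, op_smul_eq_smul, dotProduct_smul, smul_eq_mul, dotProduct_comm, sq]

lemma posSemidef_sum_vecMulVec_self (x : ℕ → n → ℝ) (j : ℕ) :
    (∑ i ∈ range j, vecMulVec (x i) (x i)).PosSemidef :=
  posSemidef_sum _ fun i _ ↦ by simpa using posSemidef_vecMulVec_self_star (x i)

lemma Matrix.PosDef.rankOneUpdates {M : Matrix n n ℝ} (hM : M.PosDef) (x : ℕ → n → ℝ) (j : ℕ) :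
    (rankOneUpdates M x j).PosDef :=
  hM.add_posSemidef (posSemidef_sum_vecMulVec_self x j)

lemma dotProduct_mulVec_le_add_posSemidef (A : Matrix n n ℝ) {P : Matrix n n ℝ}
    (hP : P.PosSemidef) (u : n → ℝ) : u ⬝ᵥ A *ᵥ u ≤ u ⬝ᵥ (A + P) *ᵥ u := by
  simpa [add_mulVec] using hP.dotProduct_mulVec_nonneg u

lemma dotProduct_add_vecMulVec_mulVec_le {A : Matrix n n ℝ} {β : ℝ} (hβ : 0 < β)
    (hA : ∀ w : n → ℝ, β * ∑ i, w i ^ 2 ≤ w ⬝ᵥ A *ᵥ w) {y : n → ℝ} (hy : ∑ i, y i ^ 2 ≤ 1)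
    (w : n → ℝ) : w ⬝ᵥ (A + vecMulVec y y) *ᵥ w ≤ (1 + 1 / β) * (w ⬝ᵥ A *ᵥ w) := by
  have hCS : (y ⬝ᵥ w) ^ 2 ≤ ∑ i, w i ^ 2 :=
    (sum_mul_sq_le_sq_mul_sq univ y w).trans <|
      mul_le_of_le_one_left (sum_nonneg fun i _ ↦ sq_nonneg (w i)) hy
  have hβw : (y ⬝ᵥ w) ^ 2 ≤ 1 / β * (w ⬝ᵥ A *ᵥ w) := by
    rw [one_div, inv_mul_eq_div, le_div_iff₀ hβ, mul_comm]
    exact (mul_le_mul_of_nonneg_left hCS hβ.le).trans (hA w)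
  rw [add_mulVec, dotProduct_add, dotProduct_vecMulVec_self_mulVec]
  linarith

variable [DecidableEq n]

lemma dotProduct_inv_mulVec_antitone {A B : Matrix n n ℝ} (hA : IsUnit A.det) (hB : B.PosDef)
    (hBA : ∀ u, u ⬝ᵥ B *ᵥ u ≤ u ⬝ᵥ A *ᵥ u) (v : n → ℝ) :
    v ⬝ᵥ A⁻¹ *ᵥ v ≤ v ⬝ᵥ B⁻¹ *ᵥ v := by
  set u := A⁻¹ *ᵥ v
  set w := B⁻¹ *ᵥ v
  have hAu : A *ᵥ u = v := by rw [mulVec_mulVec, mul_nonsing_inv _ hA, one_mulVec]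
  have hBw : B *ᵥ w = v := by
    rw [mulVec_mulVec, mul_nonsing_inv _ hB.det_pos.ne'.isUnit, one_mulVec]
  have hwBu : w ⬝ᵥ B *ᵥ u = v ⬝ᵥ u := by
    rw [dotProduct_mulVec, ← mulVec_transpose, (isHermitian_iff_isSymm.mp hB.isHermitian).eq, hBw]
  -- expanding `(u - w)ᵀ B (u - w) ≥ 0` and using `uᵀ B u ≤ uᵀ A u = vᵀ u` leaves `vᵀ u ≤ vᵀ w`
  have hnonneg : 0 ≤ (u - w) ⬝ᵥ B *ᵥ (u - w) := by
    simpa using hB.posSemidef.dotProduct_mulVec_nonneg (u - w)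
  rw [mulVec_sub, sub_dotProduct, dotProduct_sub, dotProduct_sub, hBw, hwBu] at hnonneg
  have hu := hBA u
  rw [hAu] at hu
  rw [dotProduct_comm u v, dotProduct_comm w v] at *
  linarith

lemma dotProduct_inv_mulVec_le_mul {A B : Matrix n n ℝ} (hA : IsUnit A.det) (hB : B.PosDef)
    {c : ℝ} (hc : 0 < c) (hBA : ∀ u, u ⬝ᵥ B *ᵥ u ≤ c * (u ⬝ᵥ A *ᵥ u)) (v : n → ℝ) :
    v ⬝ᵥ A⁻¹ *ᵥ v ≤ c * (v ⬝ᵥ B⁻¹ *ᵥ v) := by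
  have hcB : (c⁻¹ • B)⁻¹ = c • B⁻¹ := inv_eq_left_inv <| by
    rw [smul_mul_smul_comm, mul_inv_cancel₀ hc.ne', nonsing_inv_mul _ hB.det_pos.ne'.isUnit,
      one_smul]
  have h := dotProduct_inv_mulVec_antitone hA (hB.smul (inv_pos.mpr hc))
    (fun u ↦ by rw [smul_mulVec, dotProduct_smul, smul_eq_mul, inv_mul_le_iff₀ hc]; exact hBA u) v
  rwa [hcB, smul_mulVec, dotProduct_smul, smul_eq_mul] at h

lemma dotProduct_inv_mulVec_le_pow_mul_rankOneUpdates {M : Matrix n n ℝ} (hM : M.PosDef)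
    {β : ℝ} (hβ : 0 < β) (hMβ : ∀ w : n → ℝ, β * ∑ i, w i ^ 2 ≤ w ⬝ᵥ M *ᵥ w)
    (x : ℕ → n → ℝ) {j : ℕ} (hx : ∀ i < j, ∑ k, x i k ^ 2 ≤ 1) (v : n → ℝ) :
    v ⬝ᵥ M⁻¹ *ᵥ v ≤ (1 + 1 / β) ^ j * (v ⬝ᵥ (rankOneUpdates M x j)⁻¹ *ᵥ v) := by
  induction j with
  | zero => simp [rankOneUpdates]
  | succ j ih =>
    have hstep : ∀ u, u ⬝ᵥ rankOneUpdates M x (j + 1) *ᵥ u ≤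
        (1 + 1 / β) * (u ⬝ᵥ rankOneUpdates M x j *ᵥ u) := by
      rw [rankOneUpdates_succ]
      refine dotProduct_add_vecMulVec_mulVec_le hβ (fun w ↦ (hMβ w).trans ?_) (hx j j.lt_succ_self)
      exact dotProduct_mulVec_le_add_posSemidef M (posSemidef_sum_vecMulVec_self x j) w
    calc v ⬝ᵥ M⁻¹ *ᵥ v ≤ (1 + 1 / β) ^ j * (v ⬝ᵥ (rankOneUpdates M x j)⁻¹ *ᵥ v) :=
          ih fun i hi ↦ hx i (hi.trans j.lt_succ_self)
      _ ≤ (1 + 1 / β) ^ j * ((1 + 1 / β) * (v ⬝ᵥ (rankOneUpdates M x (j + 1))⁻¹ *ᵥ v)) := by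
          gcongr
          exact dotProduct_inv_mulVec_le_mul (hM.rankOneUpdates x j).det_pos.ne'.isUnit
            (hM.rankOneUpdates x (j + 1)) (by positivity) hstep v
      _ = (1 + 1 / β) ^ (j + 1) * (v ⬝ᵥ (rankOneUpdates M x (j + 1))⁻¹ *ᵥ v) := by ring

end

theorem quadform_inv_le_pow_mul_general
    {d : ℕ} (b : ℕ)
    (M : Matrix (Fin d) (Fin d) ℝ) (hM : M.PosDef)
    (heig : ∀ v : Fin d → ℝ, (b : ℝ) * ∑ i, v i ^ 2 ≤ v ⬝ᵥ M.mulVec v)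
    (x : ℕ → Fin d → ℝ) (hx : ∀ i < b, ∑ k, x i k ^ 2 ≤ 1) :
    ∀ (v : Fin d → ℝ) (j : ℕ), 1 ≤ j → j ≤ b →
      v ⬝ᵥ M⁻¹.mulVec v ≤ (1 + 1 / (b : ℝ)) ^ j *
        (v ⬝ᵥ (M + ∑ i ∈ Finset.range j, Matrix.vecMulVec (x i) (x i))⁻¹.mulVec v) := by
  intro v j hj hjb
  have hb : (0 : ℝ) < b := by exact_mod_cast hj.trans hjb
  exact dotProduct_inv_mulVec_le_pow_mul_rankOneUpdates hM hb heig x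
    (fun i hi ↦ hx i (hi.trans_le hjb)) v

/-- with `M` positive definite, `λ_min(M) ≥ b ≥ 1` (expressed via the quadratic
form), and vectors of norm at most one, for every `x` and `1 ≤ j ≤ b`:
`xᵀ M⁻¹ x ≤ (1 + 1/b)^j xᵀ M_j⁻¹ x`, where `M_j = M + Σ_{i<j} x_i x_iᵀ`. -/
theorem quadform_inv_le_pow_mul
    {d : ℕ} (b : ℕ) (hb : 1 ≤ b)
    (M : Matrix (Fin d) (Fin d) ℝ) (hM : M.PosDef)
    (heig : ∀ v : Fin d → ℝ, (b : ℝ) * ∑ i, v i ^ 2 ≤ v ⬝ᵥ M.mulVec v)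
    (x : ℕ → Fin d → ℝ) (hx : ∀ i < b, ∑ k, x i k ^ 2 ≤ 1) :
    ∀ (v : Fin d → ℝ) (j : ℕ), 1 ≤ j → j ≤ b →
      v ⬝ᵥ M⁻¹.mulVec v ≤ (1 + 1 / (b : ℝ)) ^ j *
        (v ⬝ᵥ (M + ∑ i ∈ Finset.range j, Matrix.vecMulVec (x i) (x i))⁻¹.mulVec v) :=
  quadform_inv_le_pow_mul_general b M hM heig x hx
end

section
/- Let s ∈ {−1,0,1} be a random variable with P(s=1) = Π·p, P(s=−1) = Π·(1−p), P(s=0) = 1 − Π, where Π ∈ [0,1] and p = σ(Δ) with σ the logistic function and Δ ∈ [−D,D]. Let L(x) = log(1 + e^{−x}), and suppose |L'| ≤ c_σ and L'' ≥ c_{σ'} on [−D,D]. Then for any Δ̂ ∈ [−D,D]: E[L(sΔ̂) − L(sΔ)] ≥ Π·(c_{σ'}/2)·(Δ̂−Δ)², and Var[L(sΔ̂) − L(sΔ)] ≤ Π·c_σ²·(Δ̂−Δ)². Consequently 0 ≤ Var[L(sΔ̂) − L(sΔ)] ≤ (2c_σ²/c_{σ'})·E[L(sΔ̂) − L(sΔ)].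 -/
/-!
With `p = σ(Δ)`, the mean of `L(sΔ̂) − L(sΔ)` is `Π (R(Δ̂) − R(Δ))` for the risk
`R(x) = p L(x) + (1 − p) L(−x)`. Since `R' = σ − p` vanishes at `Δ` and `R'' = L'' ≥ c_{σ'}`,
strong convexity bounds the mean from below. By the mean value theorem both nonzero values of
the difference are at most `c_σ |Δ̂ − Δ|` in absolute value, which bounds the second moment, hence
the variance, of a law with mass `Π` off zero.
-/

open Real Set

noncomputable def logisticLoss (x : ℝ) : ℝ := Real.log (1 + Real.exp (-x))

theorem ConvexOn.add_deriv_mul_sub_le {S : Set ℝ} {f : ℝ → ℝ} {f' x y : ℝ}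
    (hf : ConvexOn ℝ S f) (hx : x ∈ S) (hy : y ∈ S) (hd : HasDerivAt f f' x) :
    f x + f' * (y - x) ≤ f y := by
  rcases lt_trichotomy x y with hxy | rfl | hyx
  · have h := hf.le_slope_of_hasDerivAt hx hy hxy hd
    rw [slope_def_field, le_div_iff₀ (sub_pos.2 hxy)] at h
    linarith
  · simp
  · have h := hf.slope_le_of_hasDerivAt hy hx hyx hd
    rw [slope_def_field, div_le_iff₀ (sub_pos.2 hyx)] at h
    linarith

theorem Convex.add_deriv_mul_sub_add_sq_le {S : Set ℝ} (hS : Convex ℝ S)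
    {f f' f'' : ℝ → ℝ} {m x y : ℝ} (hf : ∀ t ∈ S, HasDerivAt f (f' t) t)
    (hf' : ∀ t ∈ S, HasDerivAt f' (f'' t) t) (hm : ∀ t ∈ S, m ≤ f'' t) (hx : x ∈ S) (hy : y ∈ S) :
    f x + f' x * (y - x) + m / 2 * (y - x) ^ 2 ≤ f y := by
  -- `f - m/2 (· - x)²` is convex and has the same tangent at `x` as `f`.
  have hq : ∀ t, HasDerivAt (fun t => m / 2 * (t - x) ^ 2) (m * (t - x)) t := fun t =>
    ((((hasDerivAt_id' t).sub_const x).pow 2).const_mul (m / 2)).congr_deriv (by ring)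
  have hg : ∀ t ∈ S, HasDerivAt (fun t => f t - m / 2 * (t - x) ^ 2) (f' t - m * (t - x)) t :=
    fun t ht => (hf t ht).sub (hq t)
  have hg' : ∀ t ∈ S, HasDerivAt (fun t => f' t - m * (t - x)) (f'' t - m) t := fun t ht =>
    ((hf' t ht).sub (((hasDerivAt_id' t).sub_const x).const_mul m)).congr_deriv (by ring)
  have hconv : ConvexOn ℝ S fun t => f t - m / 2 * (t - x) ^ 2 :=
    convexOn_of_hasDerivWithinAt2_nonneg hS
      (fun t ht => (hg t ht).continuousAt.continuousWithinAt)
      (fun t ht => (hg t (interior_subset ht)).hasDerivWithinAt)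
      (fun t ht => (hg' t (interior_subset ht)).hasDerivWithinAt)
      (fun t ht => sub_nonneg.2 (hm t (interior_subset ht)))
  have := hconv.add_deriv_mul_sub_le hx hy (hg x hx)
  simp only [sub_self, mul_zero, sub_zero] at this
  ring_nf at this ⊢
  linarith

theorem Convex.sq_sub_le_of_abs_deriv_le {S : Set ℝ} (hS : Convex ℝ S) {f : ℝ → ℝ}
    {C x y : ℝ} (hf : ∀ t ∈ S, DifferentiableAt ℝ f t) (hC : ∀ t ∈ S, |deriv f t| ≤ C)
    (hx : x ∈ S) (hy : y ∈ S) :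
    (f y - f x) ^ 2 ≤ C ^ 2 * (y - x) ^ 2 := by
  have h : |f y - f x| ≤ C * |y - x| := hS.norm_image_sub_le_of_norm_deriv_le hf hC hx hy
  simpa only [sq_abs, mul_pow] using pow_le_pow_left₀ (abs_nonneg _) h 2

/-- The variance of the law with masses `a`, `b`, `1 - a - b` at `A`, `B`, `0`. -/
theorem three_point_variance_nonneg {a b A B : ℝ} (ha : 0 ≤ a) (hb : 0 ≤ b)
    (hab : a + b ≤ 1) :
    0 ≤ a * A ^ 2 + b * B ^ 2 - (a * A + b * B) ^ 2 := by
  have h : a * A ^ 2 + b * B ^ 2 - (a * A + b * B) ^ 2 =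
      a * (1 - a - b) * A ^ 2 + b * (1 - a - b) * B ^ 2 + a * b * (A - B) ^ 2 := by ring
  have hc : 0 ≤ 1 - a - b := by linarith
  rw [h]
  positivity

theorem three_point_variance_le {a b A B K : ℝ} (ha : 0 ≤ a) (hb : 0 ≤ b)
    (hA : A ^ 2 ≤ K) (hB : B ^ 2 ≤ K) :
    a * A ^ 2 + b * B ^ 2 - (a * A + b * B) ^ 2 ≤ (a + b) * K := by
  nlinarith [mul_le_mul_of_nonneg_left hA ha, mul_le_mul_of_nonneg_left hB hb,
    sq_nonneg (a * A + b * B)]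

theorem Real.sigmoid_eq_exp_div (x : ℝ) : sigmoid x = exp x / (1 + exp x) := by
  rw [sigmoid_def, exp_neg]
  field_simp
  ring

theorem hasDerivAt_logisticLoss (x : ℝ) : HasDerivAt logisticLoss (sigmoid x - 1) x := by
  have h : HasDerivAt (fun y => 1 + exp (-y)) (-exp (-x)) x := by
    simpa using ((hasDerivAt_exp (-x)).comp x (hasDerivAt_neg x)).const_add 1
  refine (h.log (by positivity)).congr_deriv ?_
  rw [sigmoid_def]
  field_simp
  ring

theorem deriv_logisticLoss : deriv logisticLoss = fun x => sigmoid x - 1 :=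
  funext fun x => (hasDerivAt_logisticLoss x).deriv

theorem deriv_deriv_logisticLoss (x : ℝ) :
    deriv (deriv logisticLoss) x = sigmoid x * (1 - sigmoid x) := by
  rw [deriv_logisticLoss]
  exact ((hasDerivAt_sigmoid x).sub_const 1).deriv

/-- Expected logistic loss of the prediction `x` for a label that is `1` with probability `p`
and `-1` otherwise. -/
noncomputable def logisticRisk (p x : ℝ) : ℝ := p * logisticLoss x + (1 - p) * logisticLoss (-x)

theorem hasDerivAt_logisticRisk (p x : ℝ) : HasDerivAt (logisticRisk p) (sigmoid x - p) x := by
  have hneg : HasDerivAt (fun y => logisticLoss (-y)) (sigmoid x) x :=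
    ((hasDerivAt_logisticLoss (-x)).comp x (hasDerivAt_neg x)).congr_deriv
      (by rw [sigmoid_neg]; ring)
  exact (((hasDerivAt_logisticLoss x).const_mul p).add (hneg.const_mul (1 - p))).congr_deriv
    (by ring)

theorem logisticRisk_add_sq_le {S : Set ℝ} (hS : Convex ℝ S) {m Δ y : ℝ}
    (hm : ∀ t ∈ S, m ≤ sigmoid t * (1 - sigmoid t)) (hΔ : Δ ∈ S) (hy : y ∈ S) :
    logisticRisk (sigmoid Δ) Δ + m / 2 * (y - Δ) ^ 2 ≤ logisticRisk (sigmoid Δ) y := by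
  simpa using hS.add_deriv_mul_sub_add_sq_le (fun t _ => hasDerivAt_logisticRisk (sigmoid Δ) t)
    (fun t _ => (hasDerivAt_sigmoid t).sub_const (sigmoid Δ)) hm hΔ hy

theorem logistic_loss_bias_variance_general
    (D cσ cσ' Pr Δ Δhat : ℝ)
    (hPr : Pr ∈ Set.Icc (0:ℝ) 1)
    (hΔ : Δ ∈ Set.Icc (-D) D) (hΔhat : Δhat ∈ Set.Icc (-D) D)
    (hcσ' : 0 < cσ')
    (hL' : ∀ t ∈ Set.Icc (-D) D, |deriv logisticLoss t| ≤ cσ)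
    (hL'' : ∀ t ∈ Set.Icc (-D) D, cσ' ≤ deriv (deriv logisticLoss) t) :
    Pr * (cσ' / 2) * (Δhat - Δ) ^ 2 ≤
        Pr * (Real.exp Δ / (1 + Real.exp Δ)) * (logisticLoss Δhat - logisticLoss Δ)
          + Pr * (1 - Real.exp Δ / (1 + Real.exp Δ)) *
              (logisticLoss (-Δhat) - logisticLoss (-Δ))
      ∧ (Pr * (Real.exp Δ / (1 + Real.exp Δ)) * (logisticLoss Δhat - logisticLoss Δ) ^ 2
          + Pr * (1 - Real.exp Δ / (1 + Real.exp Δ)) *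
              (logisticLoss (-Δhat) - logisticLoss (-Δ)) ^ 2
          - (Pr * (Real.exp Δ / (1 + Real.exp Δ)) * (logisticLoss Δhat - logisticLoss Δ)
              + Pr * (1 - Real.exp Δ / (1 + Real.exp Δ)) *
                  (logisticLoss (-Δhat) - logisticLoss (-Δ))) ^ 2)
          ≤ Pr * cσ ^ 2 * (Δhat - Δ) ^ 2
      ∧ 0 ≤ (Pr * (Real.exp Δ / (1 + Real.exp Δ)) * (logisticLoss Δhat - logisticLoss Δ) ^ 2
          + Pr * (1 - Real.exp Δ / (1 + Real.exp Δ)) *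
              (logisticLoss (-Δhat) - logisticLoss (-Δ)) ^ 2
          - (Pr * (Real.exp Δ / (1 + Real.exp Δ)) * (logisticLoss Δhat - logisticLoss Δ)
              + Pr * (1 - Real.exp Δ / (1 + Real.exp Δ)) *
                  (logisticLoss (-Δhat) - logisticLoss (-Δ))) ^ 2)
      ∧ (Pr * (Real.exp Δ / (1 + Real.exp Δ)) * (logisticLoss Δhat - logisticLoss Δ) ^ 2
          + Pr * (1 - Real.exp Δ / (1 + Real.exp Δ)) *
              (logisticLoss (-Δhat) - logisticLoss (-Δ)) ^ 2
          - (Pr * (Real.exp Δ / (1 + Real.exp Δ)) * (logisticLoss Δhat - logisticLoss Δ)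
              + Pr * (1 - Real.exp Δ / (1 + Real.exp Δ)) *
                  (logisticLoss (-Δhat) - logisticLoss (-Δ))) ^ 2)
          ≤ (2 * cσ ^ 2 / cσ') *
            (Pr * (Real.exp Δ / (1 + Real.exp Δ)) * (logisticLoss Δhat - logisticLoss Δ)
              + Pr * (1 - Real.exp Δ / (1 + Real.exp Δ)) *
                  (logisticLoss (-Δhat) - logisticLoss (-Δ))) := by
  obtain ⟨hPr0, hPr1⟩ := hPr
  rw [← sigmoid_eq_exp_div]
  have hI : Convex ℝ (Icc (-D) D) := convex_Icc (-D) D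
  have hneg : ∀ t ∈ Icc (-D) D, -t ∈ Icc (-D) D :=
    fun t ht => ⟨neg_le_neg ht.2, by linarith [ht.1]⟩
  have hdiff : ∀ t ∈ Icc (-D) D, DifferentiableAt ℝ logisticLoss t :=
    fun t _ => (hasDerivAt_logisticLoss t).differentiableAt
  have hA := hI.sq_sub_le_of_abs_deriv_le hdiff hL' hΔ hΔhat
  have hB : (logisticLoss (-Δhat) - logisticLoss (-Δ)) ^ 2 ≤ cσ ^ 2 * (Δhat - Δ) ^ 2 :=
    (hI.sq_sub_le_of_abs_deriv_le hdiff hL' (hneg Δ hΔ) (hneg Δhat hΔhat)).trans_eq (by ring)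
  have hrisk := logisticRisk_add_sq_le hI (fun t ht => deriv_deriv_logisticLoss t ▸ hL'' t ht)
    hΔ hΔhat
  have hmean : Pr * (cσ' / 2) * (Δhat - Δ) ^ 2 ≤
      Pr * sigmoid Δ * (logisticLoss Δhat - logisticLoss Δ)
        + Pr * (1 - sigmoid Δ) * (logisticLoss (-Δhat) - logisticLoss (-Δ)) := by
    have := mul_le_mul_of_nonneg_left (le_sub_iff_add_le'.2 hrisk) hPr0
    unfold logisticRisk at this
    linarith
  have ha : 0 ≤ Pr * sigmoid Δ := mul_nonneg hPr0 (sigmoid_nonneg Δ)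
  have hb : 0 ≤ Pr * (1 - sigmoid Δ) := mul_nonneg hPr0 (sub_nonneg.2 (sigmoid_le_one Δ))
  have hvar := three_point_variance_le ha hb hA hB
  rw [show Pr * sigmoid Δ + Pr * (1 - sigmoid Δ) = Pr by ring, ← mul_assoc] at hvar
  refine ⟨hmean, hvar, three_point_variance_nonneg ha hb (by linarith), hvar.trans ?_⟩
  calc Pr * cσ ^ 2 * (Δhat - Δ) ^ 2
      = 2 * cσ ^ 2 / cσ' * (Pr * (cσ' / 2) * (Δhat - Δ) ^ 2) := by field_simp
    _ ≤ _ := by gcongr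

/-- for the three-point random variable `s ∈ {-1,0,1}` with
`P(s=1) = Pr p`, `P(s=-1) = Pr (1-p)`, `P(s=0) = 1-Pr`, `p = σ(Δ)`, the mean and variance of
`L(sΔ̂) − L(sΔ)` (which vanishes on `{s=0}`) satisfy the stated bounds, and hence
`0 ≤ Var ≤ (2 c_σ²/c_{σ'}) E`. -/
theorem logistic_loss_bias_variance
    (D cσ cσ' Pr Δ Δhat : ℝ)
    (hD : 0 < D)
    (hPr : Pr ∈ Set.Icc (0:ℝ) 1)
    (hΔ : Δ ∈ Set.Icc (-D) D) (hΔhat : Δhat ∈ Set.Icc (-D) D)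
    (hcσ' : 0 < cσ')
    (hL' : ∀ t ∈ Set.Icc (-D) D, |deriv logisticLoss t| ≤ cσ)
    (hL'' : ∀ t ∈ Set.Icc (-D) D, cσ' ≤ deriv (deriv logisticLoss) t) :
    Pr * (cσ' / 2) * (Δhat - Δ) ^ 2 ≤
        Pr * (Real.exp Δ / (1 + Real.exp Δ)) * (logisticLoss Δhat - logisticLoss Δ)
          + Pr * (1 - Real.exp Δ / (1 + Real.exp Δ)) *
              (logisticLoss (-Δhat) - logisticLoss (-Δ))
      ∧ (Pr * (Real.exp Δ / (1 + Real.exp Δ)) * (logisticLoss Δhat - logisticLoss Δ) ^ 2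
          + Pr * (1 - Real.exp Δ / (1 + Real.exp Δ)) *
              (logisticLoss (-Δhat) - logisticLoss (-Δ)) ^ 2
          - (Pr * (Real.exp Δ / (1 + Real.exp Δ)) * (logisticLoss Δhat - logisticLoss Δ)
              + Pr * (1 - Real.exp Δ / (1 + Real.exp Δ)) *
                  (logisticLoss (-Δhat) - logisticLoss (-Δ))) ^ 2)
          ≤ Pr * cσ ^ 2 * (Δhat - Δ) ^ 2
      ∧ 0 ≤ (Pr * (Real.exp Δ / (1 + Real.exp Δ)) * (logisticLoss Δhat - logisticLoss Δ) ^ 2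
          + Pr * (1 - Real.exp Δ / (1 + Real.exp Δ)) *
              (logisticLoss (-Δhat) - logisticLoss (-Δ)) ^ 2
          - (Pr * (Real.exp Δ / (1 + Real.exp Δ)) * (logisticLoss Δhat - logisticLoss Δ)
              + Pr * (1 - Real.exp Δ / (1 + Real.exp Δ)) *
                  (logisticLoss (-Δhat) - logisticLoss (-Δ))) ^ 2)
      ∧ (Pr * (Real.exp Δ / (1 + Real.exp Δ)) * (logisticLoss Δhat - logisticLoss Δ) ^ 2
          + Pr * (1 - Real.exp Δ / (1 + Real.exp Δ)) *
              (logisticLoss (-Δhat) - logisticLoss (-Δ)) ^ 2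
          - (Pr * (Real.exp Δ / (1 + Real.exp Δ)) * (logisticLoss Δhat - logisticLoss Δ)
              + Pr * (1 - Real.exp Δ / (1 + Real.exp Δ)) *
                  (logisticLoss (-Δhat) - logisticLoss (-Δ))) ^ 2)
          ≤ (2 * cσ ^ 2 / cσ') *
            (Pr * (Real.exp Δ / (1 + Real.exp Δ)) * (logisticLoss Δhat - logisticLoss Δ)
              + Pr * (1 - Real.exp Δ / (1 + Real.exp Δ)) *
                  (logisticLoss (-Δhat) - logisticLoss (-Δ))) :=
  logistic_loss_bias_variance_general D cσ cσ' Pr Δ Δhat hPr hΔ hΔhat hcσ' hL' hL''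
end

section
/- Under the independent-outcome model, suppose |Δ_j − Δ̂_j| ≤ ε_j for all items, where Δ_j = uᵀx_j and Δ̂_j = wᵀx_j, and the algorithm plays the sequence J = ⟨x_{j_1},...,x_{j_s}⟩ maximizing the upper-confidence expected reward built from σ(Δ̂_j + ε_j). If σ' ≤ z everywhere, then the one-step regret satisfies E_Y[R(J*,Y)] − E_Y[R(J,Y)] ≤ 4z Σ_{i=1}^s ε_{j_i} ∏_{h=1}^{i-1}(1 − σ(Δ_{j_h})) when J ≠ ⟨⟩, and ≤ 0 when J = ⟨⟩. -/
open Finset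
open scoped Classical

/-- The logistic sigmoid. -/
noncomputable def sig (t : ℝ) : ℝ := Real.exp t / (1 + Real.exp t)

/-!
The optimistic probabilities `q = σ(Δ̂ + ε)` dominate the true ones `p = σ(Δ)`, and the expected
reward is monotone in the success probabilities, so `E_p(J*) ≤ E_q(J*) ≤ E_q(J)`; the regret is
therefore at most `E_q(J) - E_p(J)`. Peeling off the first item of `J`, this difference is
`(q - p)(r₁ - V_q) + (1 - p)(V_q - V_p)` with continuation values `V` in `[-1, 1]`, so each item
contributes at most `2 (q - p) ≤ 4 z ε`, weighted by the probability that it is reached.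
-/

lemma sig_eq_sigmoid : sig = Real.sigmoid := by
  funext t
  rw [sig, Real.sigmoid_def, Real.exp_neg]
  field_simp
  ring

lemma sig_mem_Icc (t : ℝ) : sig t ∈ Set.Icc (0 : ℝ) 1 := by
  rw [sig_eq_sigmoid]
  exact ⟨Real.sigmoid_nonneg t, Real.sigmoid_le_one t⟩

lemma nonneg_of_deriv_sig_le {z : ℝ} (hz : ∀ t, deriv sig t ≤ z) : 0 ≤ z := by
  have h := hz 0
  rw [sig_eq_sigmoid, Real.deriv_sigmoid] at h
  norm_num [Real.sigmoid_zero] at h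
  linarith

lemma sig_le_sig_add {a b e : ℝ} (h : |a - b| ≤ e) : sig a ≤ sig (b + e) := by
  rw [sig_eq_sigmoid]
  exact Real.sigmoid_le (by linarith [(abs_le.mp h).2])

lemma sig_add_sub_sig_le {z a b e : ℝ} (hz : ∀ t, deriv sig t ≤ z) (h : |a - b| ≤ e) :
    sig (b + e) - sig a ≤ 2 * z * e := by
  have hdiff : Differentiable ℝ sig := sig_eq_sigmoid ▸ differentiable_sigmoid
  obtain ⟨hlo, hhi⟩ := abs_le.mp h
  calc sig (b + e) - sig a ≤ z * (b + e - a) :=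
        image_sub_le_mul_sub_of_deriv_le hdiff hz (by linarith)
    _ ≤ z * (2 * e) := mul_le_mul_of_nonneg_left (by linarith) (nonneg_of_deriv_sig_le hz)
    _ = 2 * z * e := by ring

/-- Each `c (L i)` is weighted by the probability that the cascade reaches `L i`, i.e. that all
earlier attempts fail. -/
noncomputable def reachSum {ι : Type*} [Inhabited ι] (p c : ι → ℝ) (L : List ι) : ℝ :=
  ∑ i ∈ range L.length, c (L.getD i default) * ∏ h ∈ range i, (1 - p (L.getD h default))

section reachSum

variable {ι : Type*} [Inhabited ι] (p c : ι → ℝ)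

@[simp] lemma reachSum_nil : reachSum p c [] = 0 := by
  simp [reachSum]

lemma reachSum_cons (x : ι) (L : List ι) :
    reachSum p c (x :: L) = c x + (1 - p x) * reachSum p c L := by
  simp only [reachSum, List.length_cons, sum_range_succ', prod_range_succ', mul_sum,
    List.getD_cons_succ, List.getD_cons_zero, prod_range_zero, mul_one]
  rw [add_comm]
  congr 1
  exact sum_congr rfl fun i _ => by ring

lemma reachSum_const_mul (k : ℝ) (L : List ι) :
    reachSum p (fun x => k * c x) L = k * reachSum p c L := by
  simp only [reachSum, mul_sum, mul_assoc]

end reachSum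

section seqReward

variable {ι : Type*} {p q : ι → ℝ}

lemma seqReward_le_s14 {M : ℝ} (hp : ∀ x, p x ∈ Set.Icc (0 : ℝ) 1) (L : List ι) {r l : ℕ → ℝ}
    (hr : ∀ i, 1 ≤ i → r i ≤ M) (hl : ∀ s, l s ≤ M) : seqReward p r l L ≤ M := by
  induction L generalizing r l with
  | nil => exact hl 0
  | cons x L ih =>
    have hV := ih (fun i hi => hr (i + 1) (by omega)) (fun s => hl (s + 1))
    have h1 := mul_le_mul_of_nonneg_right (hr 1 le_rfl) (hp x).1
    have h2 := mul_le_mul_of_nonneg_left hV (sub_nonneg.2 (hp x).2)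
    simp only [seqReward]
    linarith

lemma le_seqReward {m : ℝ} (hp : ∀ x, p x ∈ Set.Icc (0 : ℝ) 1) (L : List ι) {r l : ℕ → ℝ}
    (hr : ∀ i, 1 ≤ i → m ≤ r i) (hl : ∀ s, m ≤ l s) : m ≤ seqReward p r l L := by
  induction L generalizing r l with
  | nil => exact hl 0
  | cons x L ih =>
    have hV := ih (fun i hi => hr (i + 1) (by omega)) (fun s => hl (s + 1))
    have h1 := mul_le_mul_of_nonneg_right (hr 1 le_rfl) (hp x).1
    have h2 := mul_le_mul_of_nonneg_left hV (sub_nonneg.2 (hp x).2)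
    simp only [seqReward]
    linarith

lemma seqReward_cons_sub (r l : ℕ → ℝ) (x : ι) (L : List ι) :
    seqReward q r l (x :: L) - seqReward p r l (x :: L) =
      (q x - p x) * (r 1 - seqReward q (fun i => r (i + 1)) (fun i => l (i + 1)) L) +
        (1 - p x) * (seqReward q (fun i => r (i + 1)) (fun i => l (i + 1)) L -
          seqReward p (fun i => r (i + 1)) (fun i => l (i + 1)) L) := by
  simp only [seqReward]
  ring

lemma seqReward_mono (hp : ∀ x, p x ∈ Set.Icc (0 : ℝ) 1) (hq : ∀ x, q x ∈ Set.Icc (0 : ℝ) 1)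
    (hpq : ∀ x, p x ≤ q x) (L : List ι) {r l : ℕ → ℝ} (hr : ∀ i, 1 ≤ i → 0 ≤ r i)
    (hr_anti : ∀ i, 1 ≤ i → r (i + 1) ≤ r i) (hl : ∀ s, l s ≤ 0) :
    seqReward p r l L ≤ seqReward q r l L := by
  induction L generalizing r l with
  | nil => rfl
  | cons x L ih =>
    have hIH := ih (fun i hi => hr (i + 1) (by omega)) (fun i hi => hr_anti (i + 1) (by omega))
      (fun s => hl (s + 1))
    have hanti := antitoneOn_nat_Ici_of_succ_le hr_anti
    have hV : seqReward q (fun i => r (i + 1)) (fun i => l (i + 1)) L ≤ r 1 :=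
      seqReward_le_s14 hq L (fun i hi => hanti (le_refl 1) (by simp) (by omega))
        (fun s => (hl (s + 1)).trans (hr 1 le_rfl))
    rw [← sub_nonneg, seqReward_cons_sub]
    exact add_nonneg (mul_nonneg (sub_nonneg.2 (hpq x)) (sub_nonneg.2 hV))
      (mul_nonneg (sub_nonneg.2 (hp x).2) (sub_nonneg.2 hIH))

lemma seqReward_sub_le [Inhabited ι] {d : ι → ℝ} {m M : ℝ}
    (hp : ∀ x, p x ∈ Set.Icc (0 : ℝ) 1) (hq : ∀ x, q x ∈ Set.Icc (0 : ℝ) 1)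
    (hpq : ∀ x, p x ≤ q x) (hd : ∀ x, q x - p x ≤ d x) (L : List ι) {r l : ℕ → ℝ}
    (hr : ∀ i, 1 ≤ i → r i ∈ Set.Icc m M) (hl : ∀ s, l s ∈ Set.Icc m M) :
    seqReward q r l L - seqReward p r l L ≤ (M - m) * reachSum p d L := by
  induction L generalizing r l with
  | nil => simp [seqReward]
  | cons x L ih =>
    have hIH := ih (fun i hi => hr (i + 1) (by omega)) (fun s => hl (s + 1))
    have hV := le_seqReward hq L (fun i hi => (hr (i + 1) (by omega)).1) (fun s => (hl (s + 1)).1)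
    have hmM : 0 ≤ M - m := sub_nonneg.2 ((hl 0).1.trans (hl 0).2)
    have h1 : (q x - p x) * (r 1 - seqReward q (fun i => r (i + 1)) (fun i => l (i + 1)) L)
        ≤ (M - m) * d x :=
      calc _ ≤ (q x - p x) * (M - m) :=
            mul_le_mul_of_nonneg_left (by linarith [(hr 1 le_rfl).2]) (sub_nonneg.2 (hpq x))
        _ ≤ d x * (M - m) := mul_le_mul_of_nonneg_right (hd x) hmM
        _ = (M - m) * d x := mul_comm _ _
    have h2 := mul_le_mul_of_nonneg_left hIH (sub_nonneg.2 (hp x).2)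
    rw [seqReward_cons_sub, reachSum_cons]
    linear_combination h1 + h2

end seqReward

theorem one_step_regret_bound_general
    {ι : Type*} [Inhabited ι]
    (Δ Δhat ε : ι → ℝ) (r ℓ : ℕ → ℝ) (z : ℝ) (b : ℕ)
    (happrox : ∀ j, |Δ j - Δhat j| ≤ ε j)
    (hr_pos : ∀ i, 1 ≤ i → 0 < r i)
    (hr_le_one : ∀ i, 1 ≤ i → r i ≤ 1)
    (hr_mono : ∀ i, 1 ≤ i → r (i + 1) ≤ r i)
    (hℓ_ge : ∀ s, -1 ≤ ℓ s)
    (hℓ_neg : ∀ s, ℓ s < 0)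
    (hz : ∀ t : ℝ, deriv sig t ≤ z)
    (Jstar J : List ι)
    (hJstar_nodup : Jstar.Nodup) (hJstar_len : Jstar.length ≤ b)
    (hUCB : ∀ L : List ι, L.Nodup → L.length ≤ b →
      seqReward (fun x => sig (Δhat x + ε x)) r ℓ L
        ≤ seqReward (fun x => sig (Δhat x + ε x)) r ℓ J) :
    seqReward (fun x => sig (Δ x)) r ℓ Jstar - seqReward (fun x => sig (Δ x)) r ℓ J ≤
      if J = [] then 0
      else 4 * z * ∑ i ∈ Finset.range J.length,
        ε (J.getD i default) *
          ∏ h ∈ Finset.range i, (1 - sig (Δ (J.getD h default))) := by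
  set p : ι → ℝ := fun x => sig (Δ x)
  set q : ι → ℝ := fun x => sig (Δhat x + ε x)
  have hp : ∀ x, p x ∈ Set.Icc (0 : ℝ) 1 := fun x => sig_mem_Icc _
  have hq : ∀ x, q x ∈ Set.Icc (0 : ℝ) 1 := fun x => sig_mem_Icc _
  have hpq : ∀ x, p x ≤ q x := fun x => sig_le_sig_add (happrox x)
  have hbound : seqReward p r ℓ Jstar - seqReward p r ℓ J ≤ 4 * z * reachSum p ε J :=
    calc _ ≤ seqReward q r ℓ J - seqReward p r ℓ J := by
          linarith [seqReward_mono hp hq hpq Jstar (fun i hi => (hr_pos i hi).le) hr_mono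
            (fun s => (hℓ_neg s).le), hUCB Jstar hJstar_nodup hJstar_len]
      _ ≤ (1 - -1) * reachSum p (fun x => 2 * z * ε x) J :=
          seqReward_sub_le hp hq hpq (fun x => sig_add_sub_sig_le hz (happrox x)) J
            (fun i hi => ⟨by linarith [hr_pos i hi], hr_le_one i hi⟩)
            (fun s => ⟨hℓ_ge s, by linarith [hℓ_neg s]⟩)
      _ = 4 * z * reachSum p ε J := by rw [reachSum_const_mul]; ring
  split_ifs with hJ
  · simpa [hJ] using hbound
  · exact hbound

/-- one-step regret bound for the upper-confidence algorithm in the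
independent-outcome model. `Jstar` is Bayes optimal for the true probabilities `σ(Δ_j)`,
`J` maximizes the optimistic reward built from `σ(Δ̂_j + ε_j)`, and `|Δ_j - Δ̂_j| ≤ ε_j`.
Then the one-step regret is at most
`4 z Σ_i ε_{j_i} Π_{h<i}(1 - σ(Δ_{j_h}))` if `J ≠ ⟨⟩`, and at most `0` otherwise. -/
theorem one_step_regret_bound
    {ι : Type*} [Inhabited ι]
    (Δ Δhat ε : ι → ℝ) (r ℓ : ℕ → ℝ) (z : ℝ) (b : ℕ)
    (hε : ∀ j, 0 ≤ ε j)
    (happrox : ∀ j, |Δ j - Δhat j| ≤ ε j)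
    (hr_pos : ∀ i, 1 ≤ i → 0 < r i)
    (hr_le_one : ∀ i, 1 ≤ i → r i ≤ 1)
    (hr_mono : ∀ i, 1 ≤ i → r (i + 1) ≤ r i)
    (hℓ_ge : ∀ s, -1 ≤ ℓ s)
    (hℓ_neg : ∀ s, ℓ s < 0)
    (hz : ∀ t : ℝ, deriv sig t ≤ z)
    (Jstar J : List ι)
    (hJstar_nodup : Jstar.Nodup) (hJstar_len : Jstar.length ≤ b)
    (hJ_nodup : J.Nodup) (hJ_len : J.length ≤ b)
    (hBayes : ∀ L : List ι, L.Nodup → L.length ≤ b →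
      seqReward (fun x => sig (Δ x)) r ℓ L ≤ seqReward (fun x => sig (Δ x)) r ℓ Jstar)
    (hUCB : ∀ L : List ι, L.Nodup → L.length ≤ b →
      seqReward (fun x => sig (Δhat x + ε x)) r ℓ L
        ≤ seqReward (fun x => sig (Δhat x + ε x)) r ℓ J) :
    seqReward (fun x => sig (Δ x)) r ℓ Jstar - seqReward (fun x => sig (Δ x)) r ℓ J ≤
      if J = [] then 0
      else 4 * z * ∑ i ∈ Finset.range J.length,
        ε (J.getD i default) *
          ∏ h ∈ Finset.range i, (1 - sig (Δ (J.getD h default))) :=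
  one_step_regret_bound_general Δ Δhat ε r ℓ z b happrox hr_pos hr_le_one hr_mono hℓ_ge hℓ_neg hz
    Jstar J hJstar_nodup hJstar_len hUCB
end
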